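/- arXiv:1109.3948 — 13 statements merged into one kernel-verified Lean document; each statement's English description precedes it below -/
import Mathlib

section
/- Theorem 1: The region of convergence to consensus is the direct sum of the range of L and the span of 𝟙. Precisely: (a) for every x : Fin n → ℝ, x ∈ T_P if and only if there exist y : Fin n → ℝ and a : ℝ such that x = L.mulVec y + a • 𝟙; (b) the sum is direct: 𝟙 does not belong to the range of L.mulVec. -/
/-!
The limit `Q = lim Pᵏ` satisfies `Q P = Q`, hence `Q (1 - P) = 0`, and `Q 𝟙 = 𝟙` because `P 𝟙 = 𝟙`.
Conversely every `z` with `Q z = 0` lies in the range of `L = 1 - P`, so `ker Q = R(L)`.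
Then `Q x = a 𝟙` iff `x - a 𝟙 ∈ ker Q = R(L)`, and `𝟙 ∉ R(L)` since `Q 𝟙 = 𝟙 ≠ 0`.
-/

open Filter Matrix Topology

theorem mul_eq_of_tendsto_pow {M : Type*} [Monoid M] [TopologicalSpace M] [ContinuousMul M]
    [T2Space M] {P Q : M} (h : Tendsto (P ^ ·) atTop (𝓝 Q)) : Q * P = Q :=
  tendsto_nhds_unique (h.mul_const P) <| by
    simpa only [pow_succ] using (tendsto_add_atTop_iff_nat 1).2 h

namespace Matrix

variable {ι 𝕜 : Type*} [Fintype ι] [DecidableEq ι]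

section TopologicalRing

variable [Ring 𝕜] [TopologicalSpace 𝕜] [IsTopologicalRing 𝕜] [T2Space 𝕜] {P Q : Matrix ι ι 𝕜}

theorem mulVec_eq_self_of_tendsto_pow (h : Tendsto (P ^ ·) atTop (𝓝 Q)) {v : ι → 𝕜}
    (hv : P *ᵥ v = v) : Q *ᵥ v = v := by
  have hpow (k : ℕ) : (P ^ k) *ᵥ v = v := by
    induction k with
    | zero => simp
    | succ k ih => rw [pow_succ, ← mulVec_mulVec, hv, ih]
  refine tendsto_nhds_unique ((continuous_id.matrix_mulVec continuous_const).tendsto Q |>.comp h) ?_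
  simp [Function.comp_def, hpow]

theorem mul_one_sub_eq_zero_of_tendsto_pow (h : Tendsto (P ^ ·) atTop (𝓝 Q)) :
    Q * (1 - P) = 0 := by
  rw [mul_sub, mul_one, mul_eq_of_tendsto_pow h, sub_self]

end TopologicalRing

variable [NontriviallyNormedField 𝕜] [CompleteSpace 𝕜] {P Q : Matrix ι ι 𝕜}

/-- If `Q z = 0`, the vectors `(1 - Pᵏ) z = (1 - P) (∑_{i<k} Pⁱ) z` lie in the range of `1 - P`,
which is closed, and tend to `(1 - Q) z = z`. -/
theorem ker_mulVecLin_eq_range_one_sub (h : Tendsto (P ^ ·) atTop (𝓝 Q)) :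
    LinearMap.ker Q.mulVecLin = LinearMap.range (1 - P).mulVecLin := by
  refine le_antisymm (fun z hz => ?_) ?_
  · have hmem (k : ℕ) : (1 - P ^ k) *ᵥ z ∈ LinearMap.range (1 - P).mulVecLin :=
      ⟨(∑ i ∈ Finset.range k, P ^ i) *ᵥ z, by
        rw [mulVecLin_apply, mulVec_mulVec, mul_neg_geom_sum]⟩
    have hlim : Tendsto (fun k => (1 - P ^ k) *ᵥ z) atTop (𝓝 z) := by
      have : Tendsto (fun k => (1 - P ^ k) *ᵥ z) atTop (𝓝 ((1 - Q) *ᵥ z)) :=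
        ((continuous_id.matrix_mulVec continuous_const).tendsto _).comp (h.const_sub 1)
      rwa [sub_mulVec, one_mulVec, show Q *ᵥ z = 0 from hz, sub_zero] at this
    exact (Submodule.closed_of_finiteDimensional _).mem_of_tendsto hlim (.of_forall hmem)
  · rintro _ ⟨y, rfl⟩
    rw [LinearMap.mem_ker, mulVecLin_apply, mulVecLin_apply, mulVec_mulVec,
      mul_one_sub_eq_zero_of_tendsto_pow h, zero_mulVec]

end Matrix

theorem region_of_convergence_eq_range_L_oplus_span_one_general
    (n : ℕ) (hn : 0 < n) (P Q : Matrix (Fin n) (Fin n) ℝ)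
    (hProw : ∀ i, ∑ j, P i j = 1)
    (hconv : Tendsto (fun k => P ^ k) atTop (nhds Q)) :
    (∀ x : Fin n → ℝ,
      (∃ a : ℝ, ∀ i, Q.mulVec x i = a) ↔
        ∃ (y : Fin n → ℝ) (a : ℝ),
          x = (1 - P).mulVec y + a • (fun _ => (1 : ℝ))) ∧
    ¬ ∃ y : Fin n → ℝ, (fun _ => (1 : ℝ)) = (1 - P).mulVec y := by
  have hQone : Q *ᵥ 1 = 1 := mulVec_eq_self_of_tendsto_pow hconv <| by
    ext i; simp [mulVec, dotProduct, hProw]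
  have hker := ker_mulVecLin_eq_range_one_sub hconv
  simp only [← Pi.one_def]
  refine ⟨fun x => ?_, ?_⟩
  · constructor
    · rintro ⟨a, ha⟩
      have hshift : x - a • 1 ∈ LinearMap.ker Q.mulVecLin := by
        ext i
        simp [mulVec_sub, mulVec_smul, hQone, ha]
      obtain ⟨y, hy⟩ := hker ▸ hshift
      exact ⟨y, a, by rw [mulVecLin_apply] at hy; rw [hy, sub_add_cancel]⟩
    · rintro ⟨y, a, rfl⟩
      have hLy : (1 - P) *ᵥ y ∈ LinearMap.ker Q.mulVecLin := hker ▸ ⟨y, rfl⟩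
      refine ⟨a, fun i => ?_⟩
      simp [mulVec_add, mulVec_smul, show Q *ᵥ (1 - P) *ᵥ y = 0 from hLy, hQone]
  · rintro ⟨y, hy⟩
    have hone_ker : (1 : Fin n → ℝ) ∈ LinearMap.ker Q.mulVecLin := hker ▸ ⟨y, hy.symm⟩
    have := congrFun (LinearMap.mem_ker.1 hone_ker) ⟨0, hn⟩
    simp [hQone] at this

/-- Theorem 1: the region of convergence to consensus `T_P` is the direct sum
`R(L) ⊕ span 𝟙`, where `L = 1 - P`. -/
theorem region_of_convergence_eq_range_L_oplus_span_one
    (n : ℕ) (hn : 0 < n) (P Q : Matrix (Fin n) (Fin n) ℝ)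
    (hPnonneg : ∀ i j, 0 ≤ P i j) (hProw : ∀ i, ∑ j, P i j = 1)
    (hconv : Tendsto (fun k => P ^ k) atTop (nhds Q)) :
    (∀ x : Fin n → ℝ,
      (∃ a : ℝ, ∀ i, Q.mulVec x i = a) ↔
        ∃ (y : Fin n → ℝ) (a : ℝ),
          x = (1 - P).mulVec y + a • (fun _ => (1 : ℝ))) ∧
    ¬ ∃ y : Fin n → ℝ, (fun _ => (1 : ℝ)) = (1 - P).mulVec y :=
  region_of_convergence_eq_range_L_oplus_span_one_general n hn P Q hProw hconv
end

section
/- Corollary (first part): For every index i : Fin n, let L⁽ⁱ⁾ := Matrix.updateCol L i 𝟙 be the matrix obtained from L by replacing its i-th column with 𝟙. Then T_P equals the range of L⁽ⁱ⁾: for every x : Fin n → ℝ, x ∈ T_P if and only if there exists y : Fin n → ℝ with x = L⁽ⁱ⁾.mulVec y. -/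
/-!
Passing to the limit in `P ^ (k + 1) = P * P ^ k = P ^ k * P` gives `P * Q = Q = Q * P`, and `Q`
fixes every fixed vector of `P`. Hence `ker L = range Q` and `range L ≤ ker Q`, and rank–nullity
upgrades the inclusion to `range L = ker Q`. As `Q 𝟙 = 𝟙`, `Q x` is constant exactly when
`x ∈ ℝ 𝟙 + ker Q = ℝ 𝟙 + range L`; and since `L 𝟙 = 0`, the column of `L` replaced by `𝟙` is
redundant, so `ℝ 𝟙 + range L` is the range of `L⁽ⁱ⁾`.
-/

open Filter Matrix Topology

section TendstoPow

variable {M : Type*} [Monoid M] [TopologicalSpace M] [ContinuousMul M] [T2Space M] {P Q : M}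

theorem mul_eq_right_of_tendsto_pow (h : Tendsto (P ^ ·) atTop (𝓝 Q)) : P * Q = Q :=
  tendsto_nhds_unique (by simpa only [← pow_succ'] using h.const_mul P)
    ((tendsto_add_atTop_iff_nat 1).2 h)

theorem mul_eq_left_of_tendsto_pow (h : Tendsto (P ^ ·) atTop (𝓝 Q)) : Q * P = Q :=
  tendsto_nhds_unique (by simpa only [← pow_succ] using h.mul_const P)
    ((tendsto_add_atTop_iff_nat 1).2 h)

end TendstoPow

namespace Matrix

theorem mulVec_eq_self_of_tendsto_pow_s1 {n R : Type*} [Fintype n] [DecidableEq n] [Semiring R]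
    [TopologicalSpace R] [IsTopologicalSemiring R] [T2Space R] {P Q : Matrix n n R}
    (h : Tendsto (P ^ ·) atTop (𝓝 Q)) {v : n → R} (hv : P *ᵥ v = v) : Q *ᵥ v = v := by
  have hpow : ∀ k : ℕ, P ^ k *ᵥ v = v := by
    intro k
    induction k with
    | zero => exact one_mulVec v
    | succ k ih => rw [pow_succ, ← mulVec_mulVec, hv, ih]
  refine tendsto_nhds_unique (((continuous_id.matrix_mulVec continuous_const).tendsto Q).comp h) ?_
  simp only [Function.comp_def, id, hpow, tendsto_const_nhds]

theorem range_mulVecLin_one_sub_eq_ker {K : Type*} [Field K] [TopologicalSpace K]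
    [IsTopologicalRing K] [T2Space K] {n : Type*} [Fintype n] [DecidableEq n]
    {P Q : Matrix n n K} (h : Tendsto (P ^ ·) atTop (𝓝 Q)) :
    LinearMap.range (1 - P).mulVecLin = LinearMap.ker Q.mulVecLin := by
  have hker : LinearMap.ker (1 - P).mulVecLin = LinearMap.range Q.mulVecLin := by
    ext v
    simp only [LinearMap.mem_ker, LinearMap.mem_range, mulVecLin_apply]
    constructor
    · intro hv
      rw [sub_mulVec, one_mulVec, sub_eq_zero] at hv
      exact ⟨v, mulVec_eq_self_of_tendsto_pow_s1 h hv.symm⟩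
    · rintro ⟨w, rfl⟩
      rw [mulVec_mulVec, sub_mul, one_mul, mul_eq_right_of_tendsto_pow h, sub_self, zero_mulVec]
  have hle : LinearMap.range (1 - P).mulVecLin ≤ LinearMap.ker Q.mulVecLin := by
    rintro _ ⟨w, rfl⟩
    rw [LinearMap.mem_ker, mulVecLin_apply, mulVecLin_apply, mulVec_mulVec, mul_sub, mul_one,
      mul_eq_left_of_tendsto_pow h, sub_self, zero_mulVec]
  refine Submodule.eq_of_le_of_finrank_eq hle ?_
  have := (1 - P).mulVecLin.finrank_range_add_finrank_ker
  have := Q.mulVecLin.finrank_range_add_finrank_ker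
  rw [hker] at *
  omega

theorem mulVec_updateCol {m n R : Type*} [Fintype n] [DecidableEq n] [CommSemiring R]
    (A : Matrix m n R) (j : n) (c : m → R) (y : n → R) :
    updateCol A j c *ᵥ y = y j • c + A *ᵥ Function.update y j 0 := by
  ext i
  simp only [mulVec, dotProduct, Pi.add_apply, Pi.smul_apply, smul_eq_mul,
    ← Finset.add_sum_erase _ _ (Finset.mem_univ j), updateCol_self, Function.update_self,
    mul_zero, zero_add, mul_comm (c i)]
  refine congrArg _ (Finset.sum_congr rfl fun k hk => ?_)
  rw [updateCol_ne (Finset.ne_of_mem_erase hk), Function.update_of_ne (Finset.ne_of_mem_erase hk)]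

theorem exists_eq_updateCol_mulVec_iff {m n R : Type*} [Fintype n] [DecidableEq n] [CommRing R]
    {A : Matrix m n R} {j : n} {v : n → R} (hAv : A *ᵥ v = 0) (hvj : v j = 1) (c x : m → R) :
    (∃ y, x = updateCol A j c *ᵥ y) ↔ ∃ (a : R) (z : n → R), x = a • c + A *ᵥ z := by
  constructor
  · rintro ⟨y, rfl⟩
    exact ⟨y j, _, mulVec_updateCol A j c y⟩
  · rintro ⟨a, z, rfl⟩
    -- `A *ᵥ z = A *ᵥ (z - z j • v)`, and the latter argument vanishes at `j`.
    have hzj : (z - z j • v) j = 0 := by simp [hvj]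
    refine ⟨Function.update (z - z j • v) j a, ?_⟩
    rw [mulVec_updateCol, Function.update_self, Function.update_idem,
      Function.update_eq_self_iff.2 hzj.symm, mulVec_sub, mulVec_smul, hAv, smul_zero, sub_zero]

end Matrix

theorem region_of_convergence_eq_range_updateCol_one_general
    (n : ℕ) (P Q : Matrix (Fin n) (Fin n) ℝ)
    (hProw : ∀ i, ∑ j, P i j = 1)
    (hconv : Tendsto (fun k => P ^ k) atTop (nhds Q)) (i : Fin n) :
    ∀ x : Fin n → ℝ,
      (∃ a : ℝ, ∀ j, Q.mulVec x j = a) ↔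
        ∃ y : Fin n → ℝ,
          x = (Matrix.updateCol (1 - P) i (fun _ => (1 : ℝ))).mulVec y := by
  intro x
  have hP1 : P *ᵥ 1 = 1 := funext fun j => by simp [mulVec, dotProduct, hProw j]
  have hQ1 : Q *ᵥ 1 = 1 := mulVec_eq_self_of_tendsto_pow_s1 hconv hP1
  have hL1 : (1 - P) *ᵥ 1 = 0 := by rw [sub_mulVec, one_mulVec, hP1, sub_self]
  have hrange := range_mulVecLin_one_sub_eq_ker hconv
  rw [exists_eq_updateCol_mulVec_iff hL1 rfl, ← Pi.one_def]
  constructor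
  · rintro ⟨a, ha⟩
    have hker : x - a • 1 ∈ LinearMap.ker Q.mulVecLin := by
      ext j
      simp [mulVec_sub, mulVec_smul, hQ1, ha j]
    obtain ⟨z, hz⟩ := hrange.ge hker
    exact ⟨a, z, by rw [← mulVecLin_apply, hz, add_sub_cancel]⟩
  · rintro ⟨a, z, rfl⟩
    have hQz : Q *ᵥ ((1 - P) *ᵥ z) = 0 := hrange.le ⟨z, rfl⟩
    exact ⟨a, fun j => by simp [mulVec_add, mulVec_smul, hQ1, hQz]⟩

/-- Corollary (first part): `T_P` is the range of the matrix obtained from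
`L = 1 - P` by replacing its `i`-th column with the all-ones vector. -/
theorem region_of_convergence_eq_range_updateCol_one
    (n : ℕ) (hn : 0 < n) (P Q : Matrix (Fin n) (Fin n) ℝ)
    (hPnonneg : ∀ i j, 0 ≤ P i j) (hProw : ∀ i, ∑ j, P i j = 1)
    (hconv : Tendsto (fun k => P ^ k) atTop (nhds Q)) (i : Fin n) :
    ∀ x : Fin n → ℝ,
      (∃ a : ℝ, ∀ j, Q.mulVec x j = a) ↔
        ∃ y : Fin n → ℝ,
          x = (Matrix.updateCol (1 - P) i (fun _ => (1 : ℝ))).mulVec y :=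
  region_of_convergence_eq_range_updateCol_one_general n P Q hProw hconv i
end

section
/- Proposition 1: For every x : (Fin b ⊕ Fin m) → ℝ, x ∈ T_P if and only if x ∘ Sum.inl ∈ T_{P_B}; that is, x is driven to consensus by Q if and only if its restriction to the basic coordinates is driven to consensus by Q_B. -/
open Filter Matrix

/-- Proposition 1: `x ∈ T_P ↔ x_B ∈ T_{P_B}`, where `x_B` is the restriction of
`x` to the basic coordinates. -/
theorem mem_region_iff_basic_part_mem
    (b m : ℕ) (hb : 0 < b) (hm : 0 < m)
    (P_B : Matrix (Fin b) (Fin b) ℝ)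
    (B : Matrix (Fin m) (Fin b) ℝ) (D : Matrix (Fin m) (Fin m) ℝ)
    (Q : Matrix (Fin b ⊕ Fin m) (Fin b ⊕ Fin m) ℝ)
    (Q_B : Matrix (Fin b) (Fin b) ℝ)
    (hPnonneg : ∀ i j, 0 ≤ Matrix.fromBlocks P_B 0 B D i j)
    (hProw : ∀ i, ∑ j, Matrix.fromBlocks P_B 0 B D i j = 1)
    (hQ : Tendsto (fun k => Matrix.fromBlocks P_B 0 B D ^ k) atTop (nhds Q))
    (hQB : Tendsto (fun k => P_B ^ k) atTop (nhds Q_B))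
    (hQcol : ∀ i j, Q i (Sum.inr j) = 0) :
    ∀ x : (Fin b ⊕ Fin m) → ℝ,
      (∃ a : ℝ, ∀ g, Q.mulVec x g = a) ↔
        (∃ a : ℝ, ∀ i, Q_B.mulVec (x ∘ Sum.inl) i = a) := by
  set P := Matrix.fromBlocks P_B 0 B D with hP
  -- entrywise limits
  have hentry : ∀ i j, Tendsto (fun k => (P ^ k) i j) atTop (nhds (Q i j)) := by
    intro i j
    exact tendsto_pi_nhds.1 (tendsto_pi_nhds.1 hQ i) j
  have hentryB : ∀ i j, Tendsto (fun k => (P_B ^ k) i j) atTop (nhds (Q_B i j)) := by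
    intro i j
    exact tendsto_pi_nhds.1 (tendsto_pi_nhds.1 hQB i) j
  -- block structure of powers
  have hblock : ∀ k : ℕ, ∃ C, P ^ k = Matrix.fromBlocks (P_B ^ k) 0 C (D ^ k) := by
    intro k
    induction k with
    | zero => exact ⟨0, by simp [Matrix.fromBlocks_one]⟩
    | succ n ih =>
      obtain ⟨C, hC⟩ := ih
      refine ⟨C * P_B + D ^ n * B, ?_⟩
      rw [pow_succ, pow_succ, pow_succ, hC, hP, Matrix.fromBlocks_multiply]
      simp
  -- top-left block of Q equals Q_B
  have hQBentry : ∀ i j, Q (Sum.inl i) (Sum.inl j) = Q_B i j := by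
    intro i j
    refine tendsto_nhds_unique ?_ (hentryB i j)
    have : (fun k => (P ^ k) (Sum.inl i) (Sum.inl j)) = fun k => (P_B ^ k) i j := by
      funext k
      obtain ⟨C, hC⟩ := hblock k
      rw [hC]; rfl
    rw [← this]
    exact hentry (Sum.inl i) (Sum.inl j)
  -- row sums of powers
  have hrowk : ∀ k (i : Fin b ⊕ Fin m), ∑ j, (P ^ k) i j = 1 := by
    intro k
    induction k with
    | zero => intro i; simp [Matrix.one_apply]
    | succ n ih =>
      intro i
      rw [pow_succ']
      simp only [Matrix.mul_apply]
      rw [Finset.sum_comm]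
      calc ∑ l, ∑ j, P i l * (P ^ n) l j
          = ∑ l, P i l * ∑ j, (P ^ n) l j :=
            Finset.sum_congr rfl fun l _ => (Finset.mul_sum _ _ _).symm
        _ = ∑ l, P i l := by simp [ih]
        _ = 1 := hProw i
  have hQrow : ∀ i, ∑ j, Q i j = 1 := by
    intro i
    have h1 : Tendsto (fun k => ∑ j, (P ^ k) i j) atTop (nhds (∑ j, Q i j)) :=
      tendsto_finset_sum _ fun j _ => hentry i j
    have h2 : Tendsto (fun k => ∑ j, (P ^ k) i j) atTop (nhds 1) := by
      simp only [hrowk]; exact tendsto_const_nhds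
    exact tendsto_nhds_unique h1 h2
  have hQrow' : ∀ i, ∑ j, Q i (Sum.inl j) = 1 := by
    intro i
    have := hQrow i
    rw [Fintype.sum_sum_type] at this
    simpa [hQcol] using this
  -- idempotence
  have hQQ : Q * Q = Q := by
    have h1 : Tendsto (fun k => P ^ k * P ^ k) atTop (nhds (Q * Q)) := hQ.mul hQ
    have h2 : Tendsto (fun k => P ^ (2 * k)) atTop (nhds Q) :=
      hQ.comp (tendsto_atTop_mono (fun n => Nat.le_mul_of_pos_left n two_pos) tendsto_id)
    refine tendsto_nhds_unique h1 (h2.congr fun k => ?_)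
    rw [two_mul, pow_add]
  intro x
  have key : ∀ i, Q_B.mulVec (x ∘ Sum.inl) i = Q.mulVec x (Sum.inl i) := by
    intro i
    simp only [Matrix.mulVec, dotProduct, Fintype.sum_sum_type, hQcol,
      zero_mul, Finset.sum_const_zero, add_zero, Function.comp, hQBentry]
  constructor
  · rintro ⟨a, ha⟩
    exact ⟨a, fun i => by rw [key i, ha]⟩
  · rintro ⟨a, ha⟩
    refine ⟨a, fun g => ?_⟩
    have hy : Q.mulVec x = Q.mulVec (Q.mulVec x) := by
      rw [Matrix.mulVec_mulVec, hQQ]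
    rw [hy]
    have hyl : ∀ i, Q.mulVec x (Sum.inl i) = a := fun i => by rw [← key i, ha]
    have expand : Q.mulVec (Q.mulVec x) g = ∑ j, Q g j * Q.mulVec x j := rfl
    rw [expand, Fintype.sum_sum_type]
    simp only [hQcol, zero_mul, Finset.sum_const_zero, add_zero]
    calc ∑ j, Q g (Sum.inl j) * Q.mulVec x (Sum.inl j)
        = ∑ j, Q g (Sum.inl j) * a := by
          refine Finset.sum_congr rfl fun j _ => by rw [hyl]
      _ = (∑ j, Q g (Sum.inl j)) * a := by rw [Finset.sum_mul]
      _ = a := by rw [hQrow' g, one_mul]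
end

section
/- Proposition 2: The matrix S := Matrix.fromBlocks S_B 0 0 1 (whose lower-right block is the m×m identity) is the orthogonal projection onto T_P: S is symmetric (Sᵀ = S), idempotent (S * S = S), and its column space equals T_P, i.e., {S.mulVec x | x : (Fin b ⊕ Fin m) → ℝ} = T_P. -/
open Filter Matrix

/-- Proposition 2: `S = fromBlocks S_B 0 0 1` is the orthogonal projection onto
`T_P`: it is symmetric, idempotent, and its column space equals `T_P`. -/
theorem fromBlocks_is_orthogonal_projection_onto_region
    (b m : ℕ) (hb : 0 < b) (hm : 0 < m)
    (P_B : Matrix (Fin b) (Fin b) ℝ)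
    (B : Matrix (Fin m) (Fin b) ℝ) (D : Matrix (Fin m) (Fin m) ℝ)
    (Q : Matrix (Fin b ⊕ Fin m) (Fin b ⊕ Fin m) ℝ)
    (Q_B : Matrix (Fin b) (Fin b) ℝ)
    (hPnonneg : ∀ i j, 0 ≤ Matrix.fromBlocks P_B 0 B D i j)
    (hProw : ∀ i, ∑ j, Matrix.fromBlocks P_B 0 B D i j = 1)
    (hQ : Tendsto (fun k => Matrix.fromBlocks P_B 0 B D ^ k) atTop (nhds Q))
    (hQB : Tendsto (fun k => P_B ^ k) atTop (nhds Q_B))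
    (hQcol : ∀ i j, Q i (Sum.inr j) = 0)
    (S_B : Matrix (Fin b) (Fin b) ℝ)
    (hSBsym : S_Bᵀ = S_B) (hSBidem : S_B * S_B = S_B)
    (hSBcol : {v | ∃ y : Fin b → ℝ, S_B.mulVec y = v} =
      {x_B | ∃ a : ℝ, ∀ i, Q_B.mulVec x_B i = a}) :
    (Matrix.fromBlocks S_B 0 0 (1 : Matrix (Fin m) (Fin m) ℝ))ᵀ =
        Matrix.fromBlocks S_B 0 0 1 ∧
    Matrix.fromBlocks S_B 0 0 (1 : Matrix (Fin m) (Fin m) ℝ) *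
        Matrix.fromBlocks S_B 0 0 1 = Matrix.fromBlocks S_B 0 0 1 ∧
    {v | ∃ x : (Fin b ⊕ Fin m) → ℝ,
        (Matrix.fromBlocks S_B 0 0 (1 : Matrix (Fin m) (Fin m) ℝ)).mulVec x = v} =
      {x | ∃ a : ℝ, ∀ g, Q.mulVec x g = a} := by
  set P := Matrix.fromBlocks P_B 0 B D with hP
  -- block structure of powers
  have hblock : ∀ k : ℕ, ∃ C, P ^ k = Matrix.fromBlocks (P_B ^ k) 0 C (D ^ k) := by
    intro k
    induction k with
    | zero => exact ⟨0, by simp [Matrix.fromBlocks_one]⟩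
    | succ k ih =>
      obtain ⟨C, hC⟩ := ih
      refine ⟨C * P_B + D ^ k * B, ?_⟩
      rw [pow_succ, hC, hP, Matrix.fromBlocks_multiply]
      simp [pow_succ]
  -- entrywise convergence
  have hent : ∀ i j, Tendsto (fun k => (P ^ k) i j) atTop (nhds (Q i j)) := fun i j =>
    tendsto_pi_nhds.1 (tendsto_pi_nhds.1 hQ i) j
  have hentB : ∀ i j, Tendsto (fun k => (P_B ^ k) i j) atTop (nhds (Q_B i j)) := fun i j =>
    tendsto_pi_nhds.1 (tendsto_pi_nhds.1 hQB i) j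
  -- top-left block of Q is Q_B
  have hQtop : ∀ i j, Q (Sum.inl i) (Sum.inl j) = Q_B i j := by
    intro i j
    refine tendsto_nhds_unique ?_ (hentB i j)
    have : (fun k => (P ^ k) (Sum.inl i) (Sum.inl j)) = fun k => (P_B ^ k) i j := by
      funext k
      obtain ⟨C, hC⟩ := hblock k
      rw [hC, Matrix.fromBlocks_apply₁₁]
    exact this ▸ hent (Sum.inl i) (Sum.inl j)
  -- row sums of powers
  have hProwk : ∀ (k : ℕ) i, ∑ j, (P ^ k) i j = 1 := by
    intro k
    induction k with
    | zero => intro i; simp [Matrix.one_apply]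
    | succ k ih =>
      intro i
      have : ∀ j, (P ^ (k + 1)) i j = ∑ l, (P ^ k) i l * P l j := by
        intro j; rw [pow_succ, Matrix.mul_apply]
      simp only [this]
      rw [Finset.sum_comm]
      have : ∀ l, ∑ j, (P ^ k) i l * P l j = (P ^ k) i l := by
        intro l; rw [← Finset.mul_sum, hProw l, mul_one]
      simp only [this]
      exact ih i
  -- row sums of Q
  have hQrow : ∀ i, ∑ j, Q i j = 1 := by
    intro i
    refine tendsto_nhds_unique (tendsto_finset_sum _ fun j _ => hent i j) ?_
    have : (fun k => ∑ j, (P ^ k) i j) = fun _ => (1 : ℝ) := funext fun k => hProwk k i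
    exact this ▸ tendsto_const_nhds
  -- Q is idempotent
  have hQQ : Q * Q = Q := by
    have h1 : Tendsto (fun k => P ^ k * P ^ k) atTop (nhds (Q * Q)) := hQ.mul hQ
    have h2 : Tendsto (fun k : ℕ => 2 * k) atTop atTop :=
      Filter.tendsto_atTop_atTop.mpr fun n => ⟨n, fun a ha => by omega⟩
    have h3 : Tendsto (fun k => P ^ (2 * k)) atTop (nhds Q) := hQ.comp h2
    have : (fun k => P ^ (2 * k)) = fun k => P ^ k * P ^ k := by
      funext k; rw [two_mul, pow_add]
    exact tendsto_nhds_unique h1 (this ▸ h3)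
  -- basic rows of Q.mulVec
  have hmvl : ∀ (x : Fin b ⊕ Fin m → ℝ) i,
      Q.mulVec x (Sum.inl i) = Q_B.mulVec (x ∘ Sum.inl) i := by
    intro x i
    simp [Matrix.mulVec, dotProduct, Fintype.sum_sum_type, hQcol, hQtop]
  -- row sums of the lower-left block of Q
  have hQrowR : ∀ i, ∑ l, Q (Sum.inr i) (Sum.inl l) = 1 := by
    intro i
    have := hQrow (Sum.inr i)
    rw [Fintype.sum_sum_type] at this
    simpa [hQcol] using this
  -- R = R * Q_B
  have hR : ∀ i j, Q (Sum.inr i) (Sum.inl j)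
      = ∑ l, Q (Sum.inr i) (Sum.inl l) * Q_B l j := by
    intro i j
    conv_lhs => rw [← hQQ]
    rw [Matrix.mul_apply, Fintype.sum_sum_type]
    simp [hQcol, hQtop]
  -- key: constancy on basic part implies constancy everywhere
  have key : ∀ (x : Fin b ⊕ Fin m → ℝ) (a : ℝ),
      (∀ i, Q_B.mulVec (x ∘ Sum.inl) i = a) → ∀ g, Q.mulVec x g = a := by
    intro x a hx g
    cases g with
    | inl i => rw [hmvl]; exact hx i
    | inr i =>
      have h1 : Q.mulVec x (Sum.inr i) = ∑ j, Q (Sum.inr i) (Sum.inl j) * x (Sum.inl j) := by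
        simp [Matrix.mulVec, dotProduct, Fintype.sum_sum_type, hQcol]
      rw [h1]
      have h2 : ∀ j, Q (Sum.inr i) (Sum.inl j) * x (Sum.inl j)
          = ∑ l, Q (Sum.inr i) (Sum.inl l) * (Q_B l j * x (Sum.inl j)) := by
        intro j; rw [hR i j, Finset.sum_mul]; simp [mul_assoc]
      simp only [h2]
      rw [Finset.sum_comm]
      have h3 : ∀ l, ∑ j, Q (Sum.inr i) (Sum.inl l) * (Q_B l j * x (Sum.inl j))
          = Q (Sum.inr i) (Sum.inl l) * a := by
        intro l
        rw [← Finset.mul_sum]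
        congr 1
        exact hx l
      simp only [h3]
      rw [← Finset.sum_mul, hQrowR i, one_mul]
  -- mulVec of S
  have hSmv : ∀ x : Fin b ⊕ Fin m → ℝ,
      (Matrix.fromBlocks S_B 0 0 (1 : Matrix (Fin m) (Fin m) ℝ)).mulVec x
        = Sum.elim (S_B.mulVec (x ∘ Sum.inl)) (x ∘ Sum.inr) := by
    intro x
    have hx : x = Sum.elim (x ∘ Sum.inl) (x ∘ Sum.inr) := by
      funext g; cases g <;> rfl
    conv_lhs => rw [hx]
    rw [Matrix.fromBlocks_mulVec]
    simp
  refine ⟨?_, ?_, ?_⟩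
  · rw [Matrix.fromBlocks_transpose]
    simp [hSBsym]
  · rw [Matrix.fromBlocks_multiply]
    simp [hSBidem]
  · ext v
    constructor
    · rintro ⟨x, rfl⟩
      rw [hSmv]
      have hmem : S_B.mulVec (x ∘ Sum.inl) ∈
          {x_B | ∃ a : ℝ, ∀ i, Q_B.mulVec x_B i = a} := by
        rw [← hSBcol]; exact ⟨x ∘ Sum.inl, rfl⟩
      obtain ⟨a, ha⟩ := hmem
      refine ⟨a, key _ a ?_⟩
      intro i
      have : (Sum.elim (S_B.mulVec (x ∘ Sum.inl)) (x ∘ Sum.inr)) ∘ Sum.inl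
          = S_B.mulVec (x ∘ Sum.inl) := rfl
      rw [this]; exact ha i
    · rintro ⟨a, ha⟩
      have hmem : v ∘ Sum.inl ∈ {v | ∃ y : Fin b → ℝ, S_B.mulVec y = v} := by
        rw [hSBcol]
        exact ⟨a, fun i => by rw [← hmvl v i]; exact ha (Sum.inl i)⟩
      obtain ⟨y, hy⟩ := hmem
      refine ⟨Sum.elim y (v ∘ Sum.inr), ?_⟩
      rw [hSmv]
      funext g
      cases g with
      | inl i =>
        have : (Sum.elim y (v ∘ Sum.inr)) ∘ Sum.inl = y := rfl
        simp only [Sum.elim_inl, this, hy]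
        rfl
      | inr i => rfl
end

section
/- The resulting matrix Q * S of the orthogonal projection procedure is a rank-one matrix with identical rows whose common row sums to 1: there exists α : Fin n → ℝ such that (Q * S) i j = α j for all i and j, and ∑ j, α j = 1. -/
/-!
Row sums equal to one mean `M *ᵥ 1 = 1`, a condition preserved by products and by limits, so
`Q *ᵥ 1 = 1`. Hence `1` lies in `T_P`, the range of the projection `S`, and `S *ᵥ 1 = 1`; thus
`(Q * S) *ᵥ 1 = 1`. Every column of `S` also lies in `T_P`, so `Q` maps it to a constant vector:
the columns of `Q * S` are constant, i.e. its rows are identical.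
-/

open Filter Matrix

namespace Matrix

variable {m ι R : Type*} [Fintype ι]

theorem mulVec_one_apply [NonAssocSemiring R] (A : Matrix m ι R) (i : m) :
    (A *ᵥ 1) i = ∑ j, A i j := by
  simp [mulVec, dotProduct]

theorem pow_mulVec_one [DecidableEq ι] [CommSemiring R] {P : Matrix ι ι R} (hP : P *ᵥ 1 = 1)
    (k : ℕ) : P ^ k *ᵥ 1 = 1 := by
  induction k with
  | zero => exact one_mulVec 1
  | succ k ih => rw [pow_succ, ← mulVec_mulVec, hP, ih]

theorem mulVec_one_of_tendsto_pow [DecidableEq ι] [CommSemiring R] [TopologicalSpace R]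
    [IsTopologicalSemiring R] [T2Space R] {P Q : Matrix ι ι R} (hP : P *ᵥ 1 = 1)
    (hconv : Tendsto (fun k => P ^ k) atTop (nhds Q)) : Q *ᵥ 1 = 1 := by
  have hlim : Tendsto (fun k => P ^ k *ᵥ 1) atTop (nhds (Q *ᵥ 1)) :=
    ((continuous_id.matrix_mulVec continuous_const).tendsto Q).comp hconv
  simp only [pow_mulVec_one hP] at hlim
  exact tendsto_nhds_unique hlim tendsto_const_nhds

theorem mulVec_eq_self_of_mem_range [NonUnitalSemiring R] {S : Matrix ι ι R} (hS : S * S = S)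
    {v : ι → R} (hv : v ∈ Set.range S.mulVec) : S *ᵥ v = v := by
  obtain ⟨x, rfl⟩ := hv
  rw [mulVec_mulVec, hS]

theorem col_mem_range_mulVec [DecidableEq ι] [NonAssocSemiring R] (S : Matrix m ι R) (j : ι) :
    S.col j ∈ Set.range S.mulVec :=
  ⟨Pi.single j 1, mulVec_single_one S j⟩

end Matrix

theorem resulting_matrix_rows_identical_sum_one_general
    (n : ℕ) (hn : 0 < n) (P Q : Matrix (Fin n) (Fin n) ℝ)
    (hProw : ∀ i, ∑ j, P i j = 1)
    (hconv : Tendsto (fun k => P ^ k) atTop (nhds Q))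
    (S : Matrix (Fin n) (Fin n) ℝ)
    (hSidem : S * S = S)
    (hScol : {v | ∃ x : Fin n → ℝ, S.mulVec x = v} =
      {x | ∃ a : ℝ, ∀ i, Q.mulVec x i = a}) :
    ∃ α : Fin n → ℝ, (∀ i j, (Q * S) i j = α j) ∧ ∑ j, α j = 1 := by
  have hrange (x : Fin n → ℝ) :
      x ∈ Set.range S.mulVec ↔ ∃ a : ℝ, ∀ i, (Q *ᵥ x) i = a :=
    Set.ext_iff.mp hScol x
  have hQ : Q *ᵥ 1 = 1 :=
    mulVec_one_of_tendsto_pow (funext fun i => (mulVec_one_apply P i).trans (hProw i)) hconv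
  have hS : S *ᵥ 1 = 1 := mulVec_eq_self_of_mem_range hSidem ((hrange 1).2 ⟨1, by simp [hQ]⟩)
  have hcol (i j : Fin n) : (Q * S) i j = (Q * S) ⟨0, hn⟩ j := by
    obtain ⟨a, ha⟩ := (hrange _).1 (col_mem_range_mulVec S j)
    have hQcol (i : Fin n) : (Q * S) i j = a := ha i
    rw [hQcol, hQcol]
  refine ⟨(Q * S) ⟨0, hn⟩, hcol, ?_⟩
  rw [← mulVec_one_apply, ← mulVec_mulVec, hS, hQ, Pi.one_apply]

/-- The resulting matrix `Q * S` of the orthogonal projection procedure has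
identical rows summing to 1. -/
theorem resulting_matrix_rows_identical_sum_one
    (n : ℕ) (hn : 0 < n) (P Q : Matrix (Fin n) (Fin n) ℝ)
    (hPnonneg : ∀ i j, 0 ≤ P i j) (hProw : ∀ i, ∑ j, P i j = 1)
    (hconv : Tendsto (fun k => P ^ k) atTop (nhds Q))
    (S : Matrix (Fin n) (Fin n) ℝ)
    (hSsym : Sᵀ = S) (hSidem : S * S = S)
    (hScol : {v | ∃ x : Fin n → ℝ, S.mulVec x = v} =
      {x | ∃ a : ℝ, ∀ i, Q.mulVec x i = a}) :
    ∃ α : Fin n → ℝ, (∀ i j, (Q * S) i j = α j) ∧ ∑ j, α j = 1 :=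
  resulting_matrix_rows_identical_sum_one_general n hn P Q hProw hconv S hSidem hScol
end

section
/- Theorem 2: The weight vector of the orthogonal projection procedure vanishes on the nonbasic coordinates and its basic part is the common row of Q_B * S_B. Precisely, there exists α_B : Fin b → ℝ such that (Q * S) r (Sum.inl j) = α_B j and (Q * S) r (Sum.inr j') = 0 for every row index r and all j : Fin b, j' : Fin m, and moreover (Q_B * S_B) i j = α_B j for all i, j : Fin b. -/
open Filter Matrix

/-- Theorem 2: the weight vector of the orthogonal projection procedure
vanishes on the nonbasic coordinates and its basic part is the common row of
`Q_B * S_B`. -/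
theorem weight_vector_vanishes_on_nonbasic
    (b m : ℕ) (hb : 0 < b) (hm : 0 < m)
    (P_B : Matrix (Fin b) (Fin b) ℝ)
    (B : Matrix (Fin m) (Fin b) ℝ) (D : Matrix (Fin m) (Fin m) ℝ)
    (Q : Matrix (Fin b ⊕ Fin m) (Fin b ⊕ Fin m) ℝ)
    (Q_B : Matrix (Fin b) (Fin b) ℝ)
    (hPnonneg : ∀ i j, 0 ≤ Matrix.fromBlocks P_B 0 B D i j)
    (hProw : ∀ i, ∑ j, Matrix.fromBlocks P_B 0 B D i j = 1)
    (hQ : Tendsto (fun k => Matrix.fromBlocks P_B 0 B D ^ k) atTop (nhds Q))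
    (hQB : Tendsto (fun k => P_B ^ k) atTop (nhds Q_B))
    (hQcol : ∀ i j, Q i (Sum.inr j) = 0)
    (S_B : Matrix (Fin b) (Fin b) ℝ)
    (hSBsym : S_Bᵀ = S_B) (hSBidem : S_B * S_B = S_B)
    (hSBcol : {v | ∃ y : Fin b → ℝ, S_B.mulVec y = v} =
      {x_B | ∃ a : ℝ, ∀ i, Q_B.mulVec x_B i = a}) :
    ∃ α_B : Fin b → ℝ,
      (∀ (r : Fin b ⊕ Fin m) (j : Fin b),
        (Q * Matrix.fromBlocks S_B 0 0 (1 : Matrix (Fin m) (Fin m) ℝ)) r (Sum.inl j)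
          = α_B j) ∧
      (∀ (r : Fin b ⊕ Fin m) (j' : Fin m),
        (Q * Matrix.fromBlocks S_B 0 0 (1 : Matrix (Fin m) (Fin m) ℝ)) r (Sum.inr j')
          = 0) ∧
      (∀ i j : Fin b, (Q_B * S_B) i j = α_B j) := by
  set P : Matrix (Fin b ⊕ Fin m) (Fin b ⊕ Fin m) ℝ := Matrix.fromBlocks P_B 0 B D with hP
  -- entrywise limits
  have hentry : ∀ i j, Tendsto (fun k => (P ^ k) i j) atTop (nhds (Q i j)) := by
    intro i j
    exact tendsto_pi_nhds.mp (tendsto_pi_nhds.mp hQ i) j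
  have hentryB : ∀ i j, Tendsto (fun k => (P_B ^ k) i j) atTop (nhds (Q_B i j)) := by
    intro i j
    exact tendsto_pi_nhds.mp (tendsto_pi_nhds.mp hQB i) j
  -- block structure of powers
  have hblock : ∀ k : ℕ, ∃ C E, P ^ k = Matrix.fromBlocks (P_B ^ k) 0 C E := by
    intro k
    induction k with
    | zero =>
      exact ⟨0, 1, by simp [Matrix.fromBlocks_one]⟩
    | succ n ih =>
      obtain ⟨C, E, hCE⟩ := ih
      refine ⟨C * P_B + E * B, E * D, ?_⟩
      rw [pow_succ, hCE, hP, Matrix.fromBlocks_multiply, pow_succ]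
      simp
  have hQ11 : ∀ i j, Q (Sum.inl i) (Sum.inl j) = Q_B i j := by
    intro i j
    have h1 : Tendsto (fun k => (P ^ k) (Sum.inl i) (Sum.inl j)) atTop (nhds (Q_B i j)) := by
      have : (fun k => (P ^ k) (Sum.inl i) (Sum.inl j)) = fun k => (P_B ^ k) i j := by
        funext k
        obtain ⟨C, E, hCE⟩ := hblock k
        rw [hCE]; rfl
      rw [this]; exact hentryB i j
    exact tendsto_nhds_unique (hentry _ _) h1
  -- row sums of powers are 1
  have hrowk : ∀ (k : ℕ) (i), ∑ j, (P ^ k) i j = 1 := by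
    intro k
    induction k with
    | zero => intro i; simp [Matrix.one_apply]
    | succ n ih =>
      intro i
      rw [pow_succ]
      simp only [Matrix.mul_apply]
      rw [Finset.sum_comm]
      calc ∑ x, ∑ j, (P ^ n) i x * P x j
          = ∑ x, (P ^ n) i x * ∑ j, P x j :=
            Finset.sum_congr rfl fun x _ => (Finset.mul_sum _ _ _).symm
        _ = ∑ x, (P ^ n) i x := by simp [hProw]
        _ = 1 := ih i
  -- row sums of Q are 1, so the basic part of each row of Q sums to 1
  have hQrow : ∀ r, ∑ j, Q r (Sum.inl j) = 1 := by
    intro r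
    have h1 : Tendsto (fun k => ∑ j, (P ^ k) r j) atTop (nhds (∑ j, Q r j)) :=
      tendsto_finset_sum _ fun j _ => hentry r j
    have h2 : ∑ j, Q r j = 1 :=
      tendsto_nhds_unique h1 (by simpa [hrowk] using tendsto_const_nhds (α := ℝ) (f := atTop))
    have h3 : ∑ j, Q r j = ∑ j, Q r (Sum.inl j) := by
      rw [Fintype.sum_sum_type]
      simp [hQcol]
    rw [← h3, h2]
  -- Q * Q = Q
  have hQPk : ∀ k : ℕ, Q * P ^ k = Q := by
    intro k
    have h1 : Tendsto (fun n => P ^ n * P ^ k) atTop (nhds (Q * P ^ k)) :=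
      hQ.mul tendsto_const_nhds
    have h2 : Tendsto (fun n => P ^ n * P ^ k) atTop (nhds Q) := by
      have : (fun n => P ^ n * P ^ k) = fun n => P ^ (n + k) := by
        funext n; rw [pow_add]
      rw [this]
      exact hQ.comp (tendsto_add_atTop_nat k)
    exact tendsto_nhds_unique h1 h2
  have hQQ : Q * Q = Q := by
    have h1 : Tendsto (fun k => Q * P ^ k) atTop (nhds (Q * Q)) :=
      tendsto_const_nhds.mul hQ
    have h2 : Tendsto (fun k => Q * P ^ k) atTop (nhds Q) := by
      simp only [hQPk]; exact tendsto_const_nhds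
    exact tendsto_nhds_unique h1 h2
  -- the lower-left rows of Q are invariant under Q_B
  have hinv : ∀ (i : Fin m) (j : Fin b),
      Q (Sum.inr i) (Sum.inl j) = ∑ k, Q (Sum.inr i) (Sum.inl k) * Q_B k j := by
    intro i j
    conv_lhs => rw [← hQQ]
    rw [Matrix.mul_apply, Fintype.sum_sum_type]
    simp [hQcol, hQ11]
  -- columns of S_B lie in T_{P_B}
  have hcol : ∀ j : Fin b, ∃ a : ℝ, ∀ i, ∑ k, Q_B i k * S_B k j = a := by
    intro j
    have hmem : (fun k => S_B k j) ∈ {x_B | ∃ a : ℝ, ∀ i, Q_B.mulVec x_B i = a} := by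
      rw [← hSBcol]
      refine ⟨Pi.single j 1, ?_⟩
      funext i
      simp [Matrix.mulVec, dotProduct, Pi.single_apply, Finset.sum_ite_eq]
    obtain ⟨a, ha⟩ := hmem
    exact ⟨a, fun i => by simpa [Matrix.mulVec, dotProduct] using ha i⟩
  choose a ha using hcol
  refine ⟨a, ?_, ?_, ?_⟩
  · -- basic columns of Q*S
    intro r j
    rw [Matrix.mul_apply, Fintype.sum_sum_type]
    simp only [Matrix.fromBlocks_apply₁₁, Matrix.fromBlocks_apply₂₁, Matrix.zero_apply,
      mul_zero, Finset.sum_const_zero, add_zero]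
    cases r with
    | inl i =>
      simp only [hQ11]
      exact ha j i
    | inr i =>
      calc ∑ k, Q (Sum.inr i) (Sum.inl k) * S_B k j
          = ∑ k, (∑ l, Q (Sum.inr i) (Sum.inl l) * Q_B l k) * S_B k j := by
            simp_rw [← hinv]
        _ = ∑ l, Q (Sum.inr i) (Sum.inl l) * ∑ k, Q_B l k * S_B k j := by
            simp_rw [Finset.sum_mul, mul_assoc, Finset.mul_sum]
            exact Finset.sum_comm
        _ = ∑ l, Q (Sum.inr i) (Sum.inl l) * a j := by
            simp_rw [ha j]
        _ = a j := by
            rw [← Finset.sum_mul, hQrow, one_mul]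
  · -- nonbasic columns of Q*S vanish
    intro r j'
    rw [Matrix.mul_apply, Fintype.sum_sum_type]
    simp [hQcol]
  · -- Q_B * S_B has constant rows equal to a
    intro i j
    rw [Matrix.mul_apply]
    exact ha j i
end

section
/- Proposition 3: The resulting opinion vector of the orthogonal projection procedure does not depend on the initial opinions of the nonbasic agents: for all x, x' : (Fin b ⊕ Fin m) → ℝ with x ∘ Sum.inl = x' ∘ Sum.inl, one has (Q * S).mulVec x = (Q * S).mulVec x'. -/
/-!
Since the nonbasic columns of `Q` vanish, `Q *ᵥ v` only sees the basic coordinates of `v`;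
and since `S` is block lower triangular, the basic coordinates of `S *ᵥ x` are
`S_B *ᵥ (x ∘ Sum.inl)`, which do not involve the nonbasic opinions.
-/

open Filter Matrix

namespace Matrix

variable {ι α β R : Type*} [Fintype α] [Fintype β] [NonUnitalNonAssocSemiring R]

theorem mulVec_eq_of_comp_inl_eq {Q : Matrix ι (α ⊕ β) R}
    (hQ : ∀ i j, Q i (Sum.inr j) = 0) {v w : α ⊕ β → R} (h : v ∘ Sum.inl = w ∘ Sum.inl) :
    Q *ᵥ v = Q *ᵥ w := by
  funext i
  simp only [mulVec, dotProduct, Fintype.sum_sum_type, hQ, zero_mul, Finset.sum_const_zero,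
    add_zero]
  exact Finset.sum_congr rfl fun a _ => congr_arg (Q i (Sum.inl a) * ·) (congrFun h a)

theorem fromBlocks_zero₁₂_mulVec_comp_inl {γ : Type*} (A : Matrix γ α R)
    (C : Matrix ι α R) (D : Matrix ι β R) (v : α ⊕ β → R) :
    (fromBlocks A 0 C D *ᵥ v) ∘ Sum.inl = A *ᵥ (v ∘ Sum.inl) := by
  rw [fromBlocks_mulVec, zero_mulVec, add_zero, Sum.elim_comp_inl]

end Matrix

theorem resulting_vector_independent_of_nonbasic_opinions_general
    (b m : ℕ)
    (Q : Matrix (Fin b ⊕ Fin m) (Fin b ⊕ Fin m) ℝ)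
    (hQcol : ∀ i j, Q i (Sum.inr j) = 0)
    (S_B : Matrix (Fin b) (Fin b) ℝ) :
    ∀ x x' : (Fin b ⊕ Fin m) → ℝ, x ∘ Sum.inl = x' ∘ Sum.inl →
      (Q * Matrix.fromBlocks S_B 0 0 (1 : Matrix (Fin m) (Fin m) ℝ)).mulVec x =
      (Q * Matrix.fromBlocks S_B 0 0 (1 : Matrix (Fin m) (Fin m) ℝ)).mulVec x' := by
  intro x x' h
  rw [← mulVec_mulVec, ← mulVec_mulVec]
  apply mulVec_eq_of_comp_inl_eq hQcol
  rw [fromBlocks_zero₁₂_mulVec_comp_inl, fromBlocks_zero₁₂_mulVec_comp_inl, h]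

/-- Proposition 3: the resulting opinion vector of the orthogonal projection
procedure does not depend on the initial opinions of the nonbasic agents. -/
theorem resulting_vector_independent_of_nonbasic_opinions
    (b m : ℕ) (hb : 0 < b) (hm : 0 < m)
    (P_B : Matrix (Fin b) (Fin b) ℝ)
    (B : Matrix (Fin m) (Fin b) ℝ) (D : Matrix (Fin m) (Fin m) ℝ)
    (Q : Matrix (Fin b ⊕ Fin m) (Fin b ⊕ Fin m) ℝ)
    (Q_B : Matrix (Fin b) (Fin b) ℝ)
    (hPnonneg : ∀ i j, 0 ≤ Matrix.fromBlocks P_B 0 B D i j)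
    (hProw : ∀ i, ∑ j, Matrix.fromBlocks P_B 0 B D i j = 1)
    (hQ : Tendsto (fun k => Matrix.fromBlocks P_B 0 B D ^ k) atTop (nhds Q))
    (hQB : Tendsto (fun k => P_B ^ k) atTop (nhds Q_B))
    (hQcol : ∀ i j, Q i (Sum.inr j) = 0)
    (S_B : Matrix (Fin b) (Fin b) ℝ)
    (hSBsym : S_Bᵀ = S_B) (hSBidem : S_B * S_B = S_B)
    (hSBcol : {v | ∃ y : Fin b → ℝ, S_B.mulVec y = v} =
      {x_B | ∃ a : ℝ, ∀ i, Q_B.mulVec x_B i = a}) :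
    ∀ x x' : (Fin b ⊕ Fin m) → ℝ, x ∘ Sum.inl = x' ∘ Sum.inl →
      (Q * Matrix.fromBlocks S_B 0 0 (1 : Matrix (Fin m) (Fin m) ℝ)).mulVec x =
      (Q * Matrix.fromBlocks S_B 0 0 (1 : Matrix (Fin m) (Fin m) ℝ)).mulVec x' :=
  resulting_vector_independent_of_nonbasic_opinions_general b m Q hQcol S_B
end

section
/- Proposition 4: The consensus of the orthogonal projection procedure is unchanged when the nonbasic agents are excluded (keeping the initial opinions of the basic agents and their mutual influence weights): for every x : (Fin b ⊕ Fin m) → ℝ, every index g : Fin b ⊕ Fin m, and every basic index i : Fin b, ((Q * S).mulVec x) g = ((Q_B * S_B).mulVec (x ∘ Sum.inl)) i. -/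
open Filter Matrix

/-- Proposition 4: the consensus of the orthogonal projection procedure does
not change when the nonbasic agents are excluded. -/
theorem consensus_unchanged_by_excluding_nonbasic
    (b m : ℕ) (hb : 0 < b) (hm : 0 < m)
    (P_B : Matrix (Fin b) (Fin b) ℝ)
    (B : Matrix (Fin m) (Fin b) ℝ) (D : Matrix (Fin m) (Fin m) ℝ)
    (Q : Matrix (Fin b ⊕ Fin m) (Fin b ⊕ Fin m) ℝ)
    (Q_B : Matrix (Fin b) (Fin b) ℝ)
    (hPnonneg : ∀ i j, 0 ≤ Matrix.fromBlocks P_B 0 B D i j)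
    (hProw : ∀ i, ∑ j, Matrix.fromBlocks P_B 0 B D i j = 1)
    (hQ : Tendsto (fun k => Matrix.fromBlocks P_B 0 B D ^ k) atTop (nhds Q))
    (hQB : Tendsto (fun k => P_B ^ k) atTop (nhds Q_B))
    (hQcol : ∀ i j, Q i (Sum.inr j) = 0)
    (S_B : Matrix (Fin b) (Fin b) ℝ)
    (hSBsym : S_Bᵀ = S_B) (hSBidem : S_B * S_B = S_B)
    (hSBcol : {v | ∃ y : Fin b → ℝ, S_B.mulVec y = v} =
      {x_B | ∃ a : ℝ, ∀ i, Q_B.mulVec x_B i = a}) :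
    ∀ (x : (Fin b ⊕ Fin m) → ℝ) (g : Fin b ⊕ Fin m) (i : Fin b),
      (Q * Matrix.fromBlocks S_B 0 0 (1 : Matrix (Fin m) (Fin m) ℝ)).mulVec x g =
      (Q_B * S_B).mulVec (x ∘ Sum.inl) i := by

  intro x g i
  set P := Matrix.fromBlocks P_B 0 B D with hP
  have hblock : ∀ k : ℕ, ∃ C, P ^ k = Matrix.fromBlocks (P_B ^ k) 0 C (D ^ k) := by
    intro k
    induction k with
    | zero => exact ⟨0, by simp [Matrix.fromBlocks_one]⟩
    | succ k ih =>
      obtain ⟨C, hC⟩ := ih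
      refine ⟨C * P_B + D ^ k * B, ?_⟩
      rw [pow_succ, hC, hP, Matrix.fromBlocks_multiply]
      simp [pow_succ]
  have hentry : ∀ k i j, (P ^ k) (Sum.inl i) (Sum.inl j) = (P_B ^ k) i j := by
    intro k i j; obtain ⟨C, hC⟩ := hblock k; rw [hC]; simp
  have hTend : ∀ (g h : Fin b ⊕ Fin m),
      Tendsto (fun k => (P ^ k) g h) atTop (nhds (Q g h)) := by
    intro g h
    exact tendsto_pi_nhds.mp (tendsto_pi_nhds.mp hQ g) h
  have hQtop : ∀ i j, Q (Sum.inl i) (Sum.inl j) = Q_B i j := by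
    intro i j
    have h1 := hTend (Sum.inl i) (Sum.inl j)
    have h2 : Tendsto (fun k => (P_B ^ k) i j) atTop (nhds (Q_B i j)) :=
      tendsto_pi_nhds.mp (tendsto_pi_nhds.mp hQB i) j
    exact tendsto_nhds_unique (by simpa [hentry] using h1) h2
  have hQQ : Q * Q = Q := by
    have h2k : Tendsto (fun k => P ^ (k + k)) atTop (nhds Q) :=
      hQ.comp (tendsto_atTop_atTop.mpr fun n => ⟨n, fun k hk => by omega⟩)
    exact tendsto_nhds_unique (hQ.mul hQ) (by simpa [pow_add] using h2k)
  have hPk_row : ∀ k g, ∑ j, (P ^ k) g j = 1 := by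
    intro k
    induction k with
    | zero => intro g; simp [Matrix.one_apply]
    | succ k ih =>
      intro g
      calc ∑ j, (P ^ (k + 1)) g j = ∑ j, ∑ l, (P ^ k) g l * P l j := by
            simp only [pow_succ, Matrix.mul_apply]
        _ = ∑ l, ∑ j, (P ^ k) g l * P l j := Finset.sum_comm
        _ = ∑ l, (P ^ k) g l * ∑ j, P l j := by simp only [Finset.mul_sum]
        _ = 1 := by simp only [hProw, mul_one, ih g]
  have hQrow : ∀ g, ∑ j, Q g j = 1 := by
    intro g
    have h1 : Tendsto (fun k => ∑ j, (P ^ k) g j) atTop (nhds (∑ j, Q g j)) :=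
      tendsto_finset_sum _ fun j _ => hTend g j
    have h2 : Tendsto (fun k => ∑ j, (P ^ k) g j) atTop (nhds 1) := by
      simpa [hPk_row] using (tendsto_const_nhds : Tendsto (fun _ : ℕ => (1:ℝ)) atTop (nhds 1))
    exact tendsto_nhds_unique h1 h2
  have hQrowB : ∀ g, ∑ j : Fin b, Q g (Sum.inl j) = 1 := by
    intro g
    have h := hQrow g
    rw [Fintype.sum_sum_type] at h
    simpa [hQcol] using h
  set w := S_B.mulVec (x ∘ Sum.inl) with hw
  obtain ⟨a, ha⟩ : ∃ a : ℝ, ∀ i, Q_B.mulVec w i = a := by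
    have hmem : w ∈ {x_B | ∃ a : ℝ, ∀ i, Q_B.mulVec x_B i = a} := by
      rw [← hSBcol]; exact ⟨x ∘ Sum.inl, rfl⟩
    exact hmem
  have haB : ∀ l, ∑ j, Q_B l j * w j = a := fun l => ha l
  have hRHS : (Q_B * S_B).mulVec (x ∘ Sum.inl) i = a := by
    rw [← Matrix.mulVec_mulVec]; exact ha i
  rw [hRHS, ← Matrix.mulVec_mulVec]
  have hu : (Matrix.fromBlocks S_B 0 0 (1 : Matrix (Fin m) (Fin m) ℝ)).mulVec x
      = Sum.elim w (x ∘ Sum.inr) := by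
    funext l
    cases l with
    | inl l =>
      simp [Matrix.mulVec, dotProduct, Fintype.sum_sum_type, hw,
        Matrix.fromBlocks_apply₁₁, Matrix.fromBlocks_apply₁₂]
    | inr l =>
      simp [Matrix.mulVec, dotProduct, Fintype.sum_sum_type,
        Matrix.fromBlocks_apply₂₁, Matrix.fromBlocks_apply₂₂, Matrix.one_apply]
  rw [hu]
  have hexp : Q.mulVec (Sum.elim w (x ∘ Sum.inr)) g = ∑ j : Fin b, Q g (Sum.inl j) * w j := by
    rw [Matrix.mulVec, dotProduct, Fintype.sum_sum_type]
    simp [hQcol]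
  rw [hexp]
  have hQg : ∀ j, Q g (Sum.inl j) = ∑ l : Fin b, Q g (Sum.inl l) * Q_B l j := by
    intro j
    conv_lhs => rw [← hQQ]
    rw [Matrix.mul_apply, Fintype.sum_sum_type]
    simp [hQcol, hQtop]
  calc ∑ j, Q g (Sum.inl j) * w j
      = ∑ j, (∑ l, Q g (Sum.inl l) * Q_B l j) * w j := by simp_rw [← hQg]
    _ = ∑ l, Q g (Sum.inl l) * ∑ j, Q_B l j * w j := by
        simp only [Finset.sum_mul]
        rw [Finset.sum_comm]
        simp only [Finset.mul_sum, mul_assoc]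
    _ = ∑ l, Q g (Sum.inl l) * a := by simp_rw [haB]
    _ = a := by rw [← Finset.sum_mul, hQrowB, one_mul]
end

section
/- Proposition 5: Let S̃ := Matrix.fromBlocks S_B 0 B D, where B and D are the corresponding blocks of P. Then: (a) Q * S̃ = Q * S, so preequalization by S̃ followed by iterative adjustment with P leads to the same consensus as the orthogonal projection procedure; (b) if B ≠ 0, then S̃ is strictly closer to P than S in squared Frobenius norm: ∑ over all index pairs (r, c) of ((P − S̃) r c)^2 < ∑ over all index pairs (r, c) of ((P − S) r c)^2. -/
/-!
Since the nonbasic columns of `Q` vanish, `Q * M` only sees the basic rows of `M`, and those are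
`[S_B 0]` for both `S̃` and `S`; this gives (a). For (b), `P - S̃` is supported on the upper-left
block `P_B - S_B`, whereas `P - S` has the same upper-left block and in addition the lower blocks
`B` and `D - 1`, so its squared Frobenius norm is larger by `‖B‖² + ‖D - 1‖² ≥ ‖B‖² > 0`.
-/

open Filter Matrix

namespace Matrix

variable {l m n o R : Type*}

theorem fromBlocks_sub [Sub R] (A : Matrix n l R) (B : Matrix n m R) (C : Matrix o l R)
    (D : Matrix o m R) (A' : Matrix n l R) (B' : Matrix n m R) (C' : Matrix o l R)
    (D' : Matrix o m R) :
    fromBlocks A B C D - fromBlocks A' B' C' D' = fromBlocks (A - A') (B - B') (C - C') (D - D') := by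
  ext (_ | _) (_ | _) <;> rfl

theorem mul_fromBlocks_eq_of_apply_inr_eq_zero [Fintype n] [Fintype o] [NonUnitalNonAssocSemiring R]
    {k : Type*} {Q : Matrix k (n ⊕ o) R} (hQ : ∀ i j, Q i (Sum.inr j) = 0)
    (A : Matrix n l R) (B : Matrix n m R) (C C' : Matrix o l R) (D D' : Matrix o m R) :
    Q * fromBlocks A B C D = Q * fromBlocks A B C' D' := by
  ext i (_ | _) <;> simp [mul_apply, Fintype.sum_sum_type, hQ]

section SumSq

variable [Fintype l] [Fintype m] [Fintype n] [Fintype o]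

theorem sum_sum_sq_fromBlocks [Semiring R] (A : Matrix n l R) (B : Matrix n m R)
    (C : Matrix o l R) (D : Matrix o m R) :
    ∑ r, ∑ c, fromBlocks A B C D r c ^ 2 =
      ∑ r, ∑ c, A r c ^ 2 + ∑ r, ∑ c, B r c ^ 2 + ∑ r, ∑ c, C r c ^ 2 + ∑ r, ∑ c, D r c ^ 2 := by
  simp only [Fintype.sum_sum_type, fromBlocks_apply₁₁, fromBlocks_apply₁₂, fromBlocks_apply₂₁,
    fromBlocks_apply₂₂, Finset.sum_add_distrib]
  abel

variable [Ring R] [LinearOrder R] [IsStrictOrderedRing R]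

theorem sum_sum_sq_nonneg (M : Matrix m n R) : 0 ≤ ∑ r, ∑ c, M r c ^ 2 :=
  Finset.sum_nonneg fun _ _ => Finset.sum_nonneg fun _ _ => sq_nonneg _

theorem sum_sum_sq_pos {M : Matrix m n R} (hM : M ≠ 0) : 0 < ∑ r, ∑ c, M r c ^ 2 := by
  obtain ⟨r, c, hrc⟩ : ∃ r c, M r c ≠ 0 := by
    by_contra! h
    exact hM (ext h)
  refine Finset.sum_pos' (fun _ _ => Finset.sum_nonneg fun _ _ => sq_nonneg _)
    ⟨r, Finset.mem_univ _, ?_⟩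
  exact Finset.sum_pos' (fun _ _ => sq_nonneg _) ⟨c, Finset.mem_univ _, sq_pos_of_ne_zero hrc⟩

end SumSq

end Matrix

theorem nonorthogonal_preequalization_same_consensus_and_closer_general
    (b m : ℕ)
    (P_B : Matrix (Fin b) (Fin b) ℝ)
    (B : Matrix (Fin m) (Fin b) ℝ) (D : Matrix (Fin m) (Fin m) ℝ)
    (Q : Matrix (Fin b ⊕ Fin m) (Fin b ⊕ Fin m) ℝ)
    (hQcol : ∀ i j, Q i (Sum.inr j) = 0)
    (S_B : Matrix (Fin b) (Fin b) ℝ) :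
    Q * Matrix.fromBlocks S_B 0 B D =
      Q * Matrix.fromBlocks S_B 0 0 (1 : Matrix (Fin m) (Fin m) ℝ) ∧
    (B ≠ 0 →
      ∑ r, ∑ c, ((Matrix.fromBlocks P_B 0 B D - Matrix.fromBlocks S_B 0 B D) r c) ^ 2 <
      ∑ r, ∑ c, ((Matrix.fromBlocks P_B 0 B D -
        Matrix.fromBlocks S_B 0 0 (1 : Matrix (Fin m) (Fin m) ℝ)) r c) ^ 2) := by
  refine ⟨mul_fromBlocks_eq_of_apply_inr_eq_zero hQcol _ _ _ _ _ _, fun hB => ?_⟩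
  simp only [fromBlocks_sub, sub_self, sub_zero, sum_sum_sq_fromBlocks, Matrix.zero_apply,
    zero_pow two_ne_zero, Finset.sum_const_zero, add_zero]
  linarith [sum_sum_sq_pos hB, sum_sum_sq_nonneg (D - 1)]

/-- Proposition 5: with `S̃ = fromBlocks S_B 0 B D`, (a) `Q * S̃ = Q * S`;
(b) if `B ≠ 0`, then `S̃` is strictly closer to `P` than `S` in squared
Frobenius norm. -/
theorem nonorthogonal_preequalization_same_consensus_and_closer
    (b m : ℕ) (hb : 0 < b) (hm : 0 < m)
    (P_B : Matrix (Fin b) (Fin b) ℝ)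
    (B : Matrix (Fin m) (Fin b) ℝ) (D : Matrix (Fin m) (Fin m) ℝ)
    (Q : Matrix (Fin b ⊕ Fin m) (Fin b ⊕ Fin m) ℝ)
    (Q_B : Matrix (Fin b) (Fin b) ℝ)
    (hPnonneg : ∀ i j, 0 ≤ Matrix.fromBlocks P_B 0 B D i j)
    (hProw : ∀ i, ∑ j, Matrix.fromBlocks P_B 0 B D i j = 1)
    (hQ : Tendsto (fun k => Matrix.fromBlocks P_B 0 B D ^ k) atTop (nhds Q))
    (hQB : Tendsto (fun k => P_B ^ k) atTop (nhds Q_B))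
    (hQcol : ∀ i j, Q i (Sum.inr j) = 0)
    (S_B : Matrix (Fin b) (Fin b) ℝ)
    (hSBsym : S_Bᵀ = S_B) (hSBidem : S_B * S_B = S_B)
    (hSBcol : {v | ∃ y : Fin b → ℝ, S_B.mulVec y = v} =
      {x_B | ∃ a : ℝ, ∀ i, Q_B.mulVec x_B i = a}) :
    Q * Matrix.fromBlocks S_B 0 B D =
      Q * Matrix.fromBlocks S_B 0 0 (1 : Matrix (Fin m) (Fin m) ℝ) ∧
    (B ≠ 0 →
      ∑ r, ∑ c, ((Matrix.fromBlocks P_B 0 B D - Matrix.fromBlocks S_B 0 B D) r c) ^ 2 <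
      ∑ r, ∑ c, ((Matrix.fromBlocks P_B 0 B D -
        Matrix.fromBlocks S_B 0 0 (1 : Matrix (Fin m) (Fin m) ℝ)) r c) ^ 2) :=
  nonorthogonal_preequalization_same_consensus_and_closer_general b m P_B B D Q hQcol S_B
end

section
/- Theorem 3, item 2 (all agents basic): There exists α : N → ℝ such that (Q * S) g h = α h for all g, h ∈ N; moreover every component of α is positive (α h > 0 for all h) and ∑ h, α h = 1. -/
/-!
The rows of `Q` are the vectors `π i`, padded by zeros outside block `i`, so `T_P` consists of
the `y` for which `π i ⬝ᵥ y_i` does not depend on `i`. Taking `α = ∑ i, c i • π i` with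
`c i ∝ ‖π i‖⁻²` and `∑ i, c i = 1`, the vector `Q α` is constant, so `α ∈ T_P`, and
`α ⬝ᵥ y` is the common value of `Q y` for every `y ∈ T_P`. Every column `S e_h` lies in `T_P`,
hence `(Q S) g h = α ⬝ᵥ S e_h = (S α) h = α h`.
-/

open Filter Matrix

namespace Matrix

theorem blockDiagonal'_mulVec_apply {ι : Type*} [Fintype ι] [DecidableEq ι] {κ : ι → Type*}
    [∀ i, Fintype (κ i)] {R : Type*} [NonUnitalNonAssocSemiring R]
    (M : ∀ i, Matrix (κ i) (κ i) R) (x : (Σ i, κ i) → R) (i : ι) (k : κ i) :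
    (blockDiagonal' M *ᵥ x) ⟨i, k⟩ = (M i *ᵥ fun l => x ⟨i, l⟩) k := by
  simp only [mulVec, dotProduct, Fintype.sum_sigma]
  rw [Finset.sum_eq_single i]
  · simp [blockDiagonal'_apply_eq]
  · intro j _ hj
    exact Finset.sum_eq_zero fun l _ => by
      rw [blockDiagonal'_apply_ne M k l (Ne.symm hj), zero_mul]
  · simp

theorem mul_apply_eq_of_mulVec_eq_dotProduct {n R : Type*} [Fintype n] [DecidableEq n]
    [CommSemiring R] {Q S : Matrix n n R} {α : n → R} (hSsymm : Sᵀ = S) (hSidem : S * S = S)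
    (hα : α ∈ Set.range S.mulVec) (hQ : ∀ y ∈ Set.range S.mulVec, ∀ g, (Q *ᵥ y) g = α ⬝ᵥ y)
    (g h : n) : (Q * S) g h = α h := by
  obtain ⟨x, rfl⟩ := hα
  calc (Q * S) g h = (Q *ᵥ (S *ᵥ Pi.single h 1)) g := by
        rw [mulVec_mulVec, mulVec_single_one]; rfl
    _ = S *ᵥ x ⬝ᵥ S *ᵥ Pi.single h 1 := hQ _ ⟨_, rfl⟩ g
    _ = (S *ᵥ S *ᵥ x) h := by
        rw [dotProduct_mulVec, ← mulVec_transpose, hSsymm, dotProduct_single_one]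
    _ = (S *ᵥ x) h := by rw [mulVec_mulVec, hSidem]

end Matrix

section WeightVector

variable {ι : Type*} [Fintype ι] {κ : ι → Type*} [∀ i, Fintype (κ i)]

theorem dotProduct_sigma {R : Type*} [NonUnitalNonAssocSemiring R] (v w : (Σ i, κ i) → R) :
    v ⬝ᵥ w = ∑ i, (fun l => v ⟨i, l⟩) ⬝ᵥ fun l => w ⟨i, l⟩ :=
  Fintype.sum_sigma _

noncomputable def blockWeight (π : ∀ i, κ i → ℝ) (i : ι) : ℝ :=
  (π i ⬝ᵥ π i)⁻¹ / ∑ j, (π j ⬝ᵥ π j)⁻¹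

noncomputable def weightVector (π : ∀ i, κ i → ℝ) (x : Σ i, κ i) : ℝ :=
  blockWeight π x.1 * π x.1 x.2

theorem weightVector_block (π : ∀ i, κ i → ℝ) (i : ι) :
    (fun l => weightVector π ⟨i, l⟩) = blockWeight π i • π i :=
  rfl

variable {π : ∀ i, κ i → ℝ} (hπ : ∀ i l, 0 < π i l) [∀ i, Nonempty (κ i)]
include hπ

omit [Fintype ι] in
theorem dotProduct_self_pos_of_pos (i : ι) : 0 < π i ⬝ᵥ π i :=
  Finset.sum_pos (fun l _ => mul_pos (hπ i l) (hπ i l)) Finset.univ_nonempty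

theorem sum_inv_dotProduct_self_pos [Nonempty ι] : 0 < ∑ j, (π j ⬝ᵥ π j)⁻¹ :=
  Finset.sum_pos (fun j _ => inv_pos.2 (dotProduct_self_pos_of_pos hπ j)) Finset.univ_nonempty

theorem blockWeight_pos (i : ι) : 0 < blockWeight π i :=
  have : Nonempty ι := ⟨i⟩
  div_pos (inv_pos.2 (dotProduct_self_pos_of_pos hπ i)) (sum_inv_dotProduct_self_pos hπ)

theorem sum_blockWeight [Nonempty ι] : ∑ i, blockWeight π i = 1 := by
  simp only [blockWeight, ← Finset.sum_div]
  exact div_self (sum_inv_dotProduct_self_pos hπ).ne'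

theorem blockWeight_mul_dotProduct_self (i : ι) :
    blockWeight π i * (π i ⬝ᵥ π i) = (∑ j, (π j ⬝ᵥ π j)⁻¹)⁻¹ := by
  rw [blockWeight, div_mul_eq_mul_div, inv_mul_cancel₀ (dotProduct_self_pos_of_pos hπ i).ne',
    one_div]

theorem weightVector_pos (x : Σ i, κ i) : 0 < weightVector π x :=
  mul_pos (blockWeight_pos hπ x.1) (hπ x.1 x.2)

theorem dotProduct_weightVector_block (i : ι) :
    (π i ⬝ᵥ fun l => weightVector π ⟨i, l⟩) = (∑ j, (π j ⬝ᵥ π j)⁻¹)⁻¹ := by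
  rw [weightVector_block, dotProduct_smul, smul_eq_mul, blockWeight_mul_dotProduct_self hπ]

theorem weightVector_dotProduct_of_forall_block_eq [Nonempty ι] {y : (Σ i, κ i) → ℝ} {a : ℝ}
    (hy : ∀ i, (π i ⬝ᵥ fun l => y ⟨i, l⟩) = a) : weightVector π ⬝ᵥ y = a := by
  calc weightVector π ⬝ᵥ y = ∑ i, blockWeight π i * (π i ⬝ᵥ fun l => y ⟨i, l⟩) :=
        (dotProduct_sigma _ _).trans <| Finset.sum_congr rfl fun i _ => by
          rw [weightVector_block, smul_dotProduct, smul_eq_mul]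
    _ = a := by rw [Finset.sum_congr rfl fun i _ => by rw [hy i], ← Finset.sum_mul,
        sum_blockWeight hπ, one_mul]

theorem sum_weightVector [Nonempty ι] (hsum : ∀ i, ∑ l, π i l = 1) :
    ∑ x, weightVector π x = 1 := by
  rw [← dotProduct_one]
  exact weightVector_dotProduct_of_forall_block_eq hπ fun i => (dotProduct_one _).trans (hsum i)

end WeightVector

theorem weight_vector_positive_sums_to_one_general
    (ν : ℕ) (hν : 0 < ν) (m : Fin ν → ℕ) (hm : ∀ i, 1 ≤ m i)
    (π : ∀ i : Fin ν, Fin (m i) → ℝ)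
    (R : ∀ i : Fin ν, Matrix (Fin (m i)) (Fin (m i)) ℝ)
    (hπpos : ∀ i l, 0 < π i l) (hπsum : ∀ i, ∑ l, π i l = 1)
    (hR : ∀ i k l, R i k l = π i l)
    (Q : Matrix ((i : Fin ν) × Fin (m i)) ((i : Fin ν) × Fin (m i)) ℝ)
    (hQ : Q = Matrix.blockDiagonal' R)
    (S : Matrix ((i : Fin ν) × Fin (m i)) ((i : Fin ν) × Fin (m i)) ℝ)
    (hSsym : Sᵀ = S) (hSidem : S * S = S)
    (hScol : {v | ∃ x : ((i : Fin ν) × Fin (m i)) → ℝ, S.mulVec x = v} =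
      {x | ∃ a : ℝ, ∀ g, Q.mulVec x g = a}) :
    ∃ α : ((i : Fin ν) × Fin (m i)) → ℝ,
      (∀ g h, (Q * S) g h = α h) ∧ (∀ h, 0 < α h) ∧ ∑ h, α h = 1 := by
  have : ∀ i, Nonempty (Fin (m i)) := fun i => ⟨⟨0, hm i⟩⟩
  have : Nonempty (Fin ν) := ⟨⟨0, hν⟩⟩
  have hQ_mulVec (x : ((i : Fin ν) × Fin (m i)) → ℝ) (i : Fin ν) (k : Fin (m i)) :
      (Q *ᵥ x) ⟨i, k⟩ = π i ⬝ᵥ fun l => x ⟨i, l⟩ := by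
    rw [hQ, blockDiagonal'_mulVec_apply]
    change R i k ⬝ᵥ _ = _
    rw [show R i k = π i from funext (hR i k)]
  have hrange : Set.range S.mulVec = {x | ∃ a : ℝ, ∀ g, (Q *ᵥ x) g = a} := hScol
  refine ⟨weightVector π, mul_apply_eq_of_mulVec_eq_dotProduct hSsym hSidem ?_ ?_,
    weightVector_pos hπpos, sum_weightVector hπpos hπsum⟩
  · rw [hrange]
    exact ⟨_, fun ⟨i, k⟩ => by rw [hQ_mulVec, dotProduct_weightVector_block hπpos]⟩
  · rw [hrange]
    rintro y ⟨a, hy⟩ g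
    rw [hy, weightVector_dotProduct_of_forall_block_eq hπpos fun i => by
      rw [← hQ_mulVec, hy ⟨i, ⟨0, hm i⟩⟩]]

/-- Theorem 3, item 2 (all agents basic): the rows of `Q * S` are identical,
and the common row `α` has positive components summing to 1. -/
theorem weight_vector_positive_sums_to_one
    (ν : ℕ) (hν : 0 < ν) (m : Fin ν → ℕ) (hm : ∀ i, 1 ≤ m i)
    (P : ∀ i : Fin ν, Matrix (Fin (m i)) (Fin (m i)) ℝ)
    (π : ∀ i : Fin ν, Fin (m i) → ℝ)
    (R : ∀ i : Fin ν, Matrix (Fin (m i)) (Fin (m i)) ℝ)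
    (hPnonneg : ∀ i k l, 0 ≤ P i k l) (hProw : ∀ i k, ∑ l, P i k l = 1)
    (hπpos : ∀ i l, 0 < π i l) (hπsum : ∀ i, ∑ l, π i l = 1)
    (hR : ∀ i k l, R i k l = π i l)
    (hconv : ∀ i, Tendsto (fun k => P i ^ k) atTop (nhds (R i)))
    (Q : Matrix ((i : Fin ν) × Fin (m i)) ((i : Fin ν) × Fin (m i)) ℝ)
    (hQ : Q = Matrix.blockDiagonal' R)
    (S : Matrix ((i : Fin ν) × Fin (m i)) ((i : Fin ν) × Fin (m i)) ℝ)
    (hSsym : Sᵀ = S) (hSidem : S * S = S)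
    (hScol : {v | ∃ x : ((i : Fin ν) × Fin (m i)) → ℝ, S.mulVec x = v} =
      {x | ∃ a : ℝ, ∀ g, Q.mulVec x g = a}) :
    ∃ α : ((i : Fin ν) × Fin (m i)) → ℝ,
      (∀ g h, (Q * S) g h = α h) ∧ (∀ h, 0 < α h) ∧ ∑ h, α h = 1 :=
  weight_vector_positive_sums_to_one_general ν hν m hm π R hπpos hπsum hR Q hQ S hSsym hSidem hScol
end

section
/- Theorem 3, item 3 (all agents basic): For all indices g = ⟨i, k⟩ and h = ⟨j, r⟩ in N, one has α ⟨i, k⟩ * π j r * (∑ l, (π i l)^2) = α ⟨j, r⟩ * π i k * (∑ l, (π j l)^2). Equivalently, α_g / α_h = (β_i · π^i_k)/(β_j · π^j_r), where β_i := 1 / ∑_l (π^i_l)² measures the internal homogeneity of the i-th bicomponent. -/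
open Filter Matrix

/-- Theorem 3, item 3 (all agents basic): the components of the weight vector
`α` satisfy `α_g / α_h = (β_{c(g)} π^{c(g)}_g) / (β_{c(h)} π^{c(h)}_h)` with
`β_i = 1 / ∑_l (π^i_l)²`, stated in product form. -/
theorem weight_vector_ratio_formula
    (ν : ℕ) (hν : 0 < ν) (m : Fin ν → ℕ) (hm : ∀ i, 1 ≤ m i)
    (P : ∀ i : Fin ν, Matrix (Fin (m i)) (Fin (m i)) ℝ)
    (π : ∀ i : Fin ν, Fin (m i) → ℝ)
    (R : ∀ i : Fin ν, Matrix (Fin (m i)) (Fin (m i)) ℝ)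
    (hPnonneg : ∀ i k l, 0 ≤ P i k l) (hProw : ∀ i k, ∑ l, P i k l = 1)
    (hπpos : ∀ i l, 0 < π i l) (hπsum : ∀ i, ∑ l, π i l = 1)
    (hR : ∀ i k l, R i k l = π i l)
    (hconv : ∀ i, Tendsto (fun k => P i ^ k) atTop (nhds (R i)))
    (Q : Matrix ((i : Fin ν) × Fin (m i)) ((i : Fin ν) × Fin (m i)) ℝ)
    (hQ : Q = Matrix.blockDiagonal' R)
    (S : Matrix ((i : Fin ν) × Fin (m i)) ((i : Fin ν) × Fin (m i)) ℝ)
    (hSsym : Sᵀ = S) (hSidem : S * S = S)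
    (hScol : {v | ∃ x : ((i : Fin ν) × Fin (m i)) → ℝ, S.mulVec x = v} =
      {x | ∃ a : ℝ, ∀ g, Q.mulVec x g = a})
    (α : ((i : Fin ν) × Fin (m i)) → ℝ)
    (hα : ∀ g h, (Q * S) g h = α h) :
    ∀ (i j : Fin ν) (k : Fin (m i)) (r : Fin (m j)),
      α ⟨i, k⟩ * π j r * (∑ l, (π i l) ^ 2) =
        α ⟨j, r⟩ * π i k * (∑ l, (π j l) ^ 2) := by
  classical
  have hne : ∀ i : Fin ν, Nonempty (Fin (m i)) := fun i => ⟨⟨0, hm i⟩⟩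
  have hSsymm : ∀ g h, S g h = S h g := by
    intro g h
    conv_lhs => rw [← hSsym, transpose_apply]
  -- sum against a row of Q
  have hrow : ∀ (i : Fin ν) (k : Fin (m i)) (f : ((i : Fin ν) × Fin (m i)) → ℝ),
      (∑ g, Q ⟨i, k⟩ g * f g) = ∑ l, π i l * f ⟨i, l⟩ := by
    intro i k f
    rw [← Finset.univ_sigma_univ, Finset.sum_sigma]
    rw [Finset.sum_eq_single i]
    · apply Finset.sum_congr rfl
      intro l _
      rw [hQ, blockDiagonal'_apply_eq, hR]
    · intro b _ hb
      apply Finset.sum_eq_zero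
      intro l _
      rw [hQ, blockDiagonal'_apply_ne _ _ _ (Ne.symm hb), zero_mul]
    · intro h; exact absurd (Finset.mem_univ i) h
  have hQmul : ∀ (x : ((i : Fin ν) × Fin (m i)) → ℝ) (i : Fin ν) (k : Fin (m i)),
      Q.mulVec x ⟨i, k⟩ = ∑ l, π i l * x ⟨i, l⟩ := by
    intro x i k
    simp only [Matrix.mulVec, dotProduct]
    exact hrow i k x
  -- α is S applied to any row of Q
  have hSα : ∀ (i : Fin ν) (k : Fin (m i)),
      S.mulVec (fun h => Q ⟨i, k⟩ h) = α := by
    intro i k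
    funext h
    have hh := hα ⟨i, k⟩ h
    rw [Matrix.mul_apply] at hh
    rw [← hh]
    simp only [Matrix.mulVec, dotProduct]
    apply Finset.sum_congr rfl
    intro x _
    rw [hSsymm h x]; ring
  -- symmetry swap for dot products with S
  have swap : ∀ (v w : ((i : Fin ν) × Fin (m i)) → ℝ),
      dotProduct (S.mulVec v) w = dotProduct v (S.mulVec w) := by
    intro v w
    simp only [dotProduct, Matrix.mulVec, Finset.sum_mul, Finset.mul_sum]
    rw [Finset.sum_comm]
    apply Finset.sum_congr rfl
    intro g _
    apply Finset.sum_congr rfl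
    intro h _
    rw [hSsymm h g]; ring
  obtain ⟨i0⟩ : Nonempty (Fin ν) := ⟨⟨0, hν⟩⟩
  obtain ⟨k0⟩ := hne i0
  -- α lies in T_P
  have hαmem : α ∈ {x : ((i : Fin ν) × Fin (m i)) → ℝ | ∃ a : ℝ, ∀ g, Q.mulVec x g = a} := by
    rw [← hScol]
    exact ⟨_, hSα i0 k0⟩
  obtain ⟨c, hc⟩ := hαmem
  have hblock : ∀ i : Fin ν, ∑ l, π i l * α ⟨i, l⟩ = c := by
    intro i
    obtain ⟨k⟩ := hne i
    rw [← hQmul α i k]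
    exact hc ⟨i, k⟩
  -- orthogonality: within each block, α ⊥ (π_i)^⊥
  have horth : ∀ (i : Fin ν) (w : Fin (m i) → ℝ), (∑ l, π i l * w l) = 0 →
      ∑ l, α ⟨i, l⟩ * w l = 0 := by
    intro i w hw
    obtain ⟨k⟩ := hne i
    set x : ((i : Fin ν) × Fin (m i)) → ℝ :=
      fun g => if h : g.1 = i then w (h ▸ g.2) else 0 with hxdef
    have hxval : ∀ l, x ⟨i, l⟩ = w l := fun l => by simp [hxdef]
    have hxzero : ∀ (i' : Fin ν), i' ≠ i → ∀ l : Fin (m i'), x ⟨i', l⟩ = 0 := by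
      intro i' hi' l; simp [hxdef, hi']
    have hxT : x ∈ {x : ((i : Fin ν) × Fin (m i)) → ℝ | ∃ a : ℝ, ∀ g, Q.mulVec x g = a} := by
      refine ⟨0, ?_⟩
      rintro ⟨i', l⟩
      rw [hQmul]
      by_cases h : i' = i
      · subst h
        simp only [hxval]
        exact hw
      · apply Finset.sum_eq_zero
        intro l' _
        rw [hxzero i' h]; ring
    rw [← hScol] at hxT
    obtain ⟨y, hy⟩ := hxT
    have e1 : ∑ l, α ⟨i, l⟩ * w l = dotProduct α x := by
      simp only [dotProduct]
      rw [← Finset.univ_sigma_univ, Finset.sum_sigma]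
      rw [Finset.sum_eq_single i]
      · apply Finset.sum_congr rfl
        intro l _
        rw [hxval]
      · intro b _ hb
        apply Finset.sum_eq_zero
        intro l _
        rw [hxzero b hb, mul_zero]
      · intro h; exact absurd (Finset.mem_univ i) h
    have e2 : dotProduct α x = dotProduct (fun h => Q ⟨i, k⟩ h) x := by
      rw [← hSα i k, ← hy, swap, Matrix.mulVec_mulVec, hSidem]
    have e3 : dotProduct (fun h => Q ⟨i, k⟩ h) x = 0 := by
      simp only [dotProduct]
      rw [hrow]
      simp only [hxval]
      exact hw
    rw [e1, e2, e3]
  -- strict positivity of ∑ π²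
  have hpos : ∀ i : Fin ν, 0 < ∑ l, (π i l) ^ 2 := by
    intro i
    obtain ⟨k⟩ := hne i
    apply Finset.sum_pos
    · intro l _; exact pow_pos (hπpos i l) 2
    · exact ⟨k, Finset.mem_univ k⟩
  -- pointwise identity: α ⟨i,l⟩ * ∑ π² = c * π i l
  have hpoint : ∀ (i : Fin ν) (l : Fin (m i)),
      α ⟨i, l⟩ * (∑ l', (π i l') ^ 2) = c * π i l := by
    intro i l
    set A := ∑ l', (π i l') ^ 2 with hA
    have hA0 : A ≠ 0 := ne_of_gt (hpos i)
    set t : ℝ := c / A with ht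
    have htA : t * A = c := by
      rw [ht]; field_simp
    have hw0 : ∑ l', π i l' * (α ⟨i, l'⟩ - t * π i l') = 0 := by
      have expand : ∑ l', π i l' * (α ⟨i, l'⟩ - t * π i l')
          = (∑ l', π i l' * α ⟨i, l'⟩) - t * ∑ l', (π i l') ^ 2 := by
        rw [Finset.mul_sum, ← Finset.sum_sub_distrib]
        apply Finset.sum_congr rfl
        intro l' _; ring
      rw [expand, hblock i, ← hA, ← htA]; ring
    have hαw := horth i (fun l' => α ⟨i, l'⟩ - t * π i l') hw0
    have hsq : ∑ l', (α ⟨i, l'⟩ - t * π i l') ^ 2 = 0 := by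
      have expand : ∑ l', (α ⟨i, l'⟩ - t * π i l') ^ 2
          = (∑ l', α ⟨i, l'⟩ * (α ⟨i, l'⟩ - t * π i l'))
            - t * ∑ l', π i l' * (α ⟨i, l'⟩ - t * π i l') := by
        rw [Finset.mul_sum, ← Finset.sum_sub_distrib]
        apply Finset.sum_congr rfl
        intro l' _; ring
      rw [expand, hαw, hw0]; ring
    have hterm : (α ⟨i, l⟩ - t * π i l) ^ 2 = 0 := by
      have := (Finset.sum_eq_zero_iff_of_nonneg
        (fun l' _ => sq_nonneg (α ⟨i, l'⟩ - t * π i l'))).mp hsq l (Finset.mem_univ l)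
      exact this
    have hal : α ⟨i, l⟩ = t * π i l := by
      have := pow_eq_zero_iff (n := 2) (by norm_num) |>.mp hterm
      linarith [this]
    rw [hal, ← htA]; ring
  intro i j k r
  have h1 := hpoint i k
  have h2 := hpoint j r
  linear_combination π j r * h1 - π i k * h2
end

section
/- Proposition 7, item 2: The resulting matrix Π := Q * S of the orthogonal projection procedure (the regularized power limit of P) satisfies Π * P = Π, P * Π = Π, Q * Π = Π, and Π * Q = Π. -/
open Filter Matrix Topology

/-!
Passing to the limit in `P ^ (k + 1) = P ^ k * P = P * P ^ k` gives `Q P = P Q = Q`, and then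
`Q Q = Q`. So `Q (P - 1) = Q (Q - 1) = 0`: the columns of `P - 1` and `Q - 1` lie in `ker Q`, which
is contained in the consensus region `T_P`, the range of the projection `S`. Hence `S` fixes them,
i.e. `S X = S + X - 1` for `X ∈ {P, Q}`, and `Q S X = Q S + Q X - Q = Q S`.
-/

section PowerLimit

variable {M : Type*} [Monoid M] [TopologicalSpace M] [ContinuousMul M] [T2Space M] {P Q : M}

theorem limit_mul_eq_of_tendsto_pow (h : Tendsto (fun k => P ^ k) atTop (𝓝 Q)) : Q * P = Q :=
  tendsto_nhds_unique (h.mul_const P) <| by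
    simpa only [← pow_succ] using (tendsto_add_atTop_iff_nat 1).mpr h

theorem mul_limit_eq_of_tendsto_pow (h : Tendsto (fun k => P ^ k) atTop (𝓝 Q)) : P * Q = Q :=
  tendsto_nhds_unique (h.const_mul P) <| by
    simpa only [← pow_succ'] using (tendsto_add_atTop_iff_nat 1).mpr h

theorem isIdempotentElem_of_tendsto_pow (h : Tendsto (fun k => P ^ k) atTop (𝓝 Q)) :
    IsIdempotentElem Q := by
  have hQP : ∀ k : ℕ, Q * P ^ k = Q := by
    intro k
    induction k with
    | zero => rw [pow_zero, mul_one]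
    | succ k ih => rw [pow_succ, ← mul_assoc, ih, limit_mul_eq_of_tendsto_pow h]
  exact tendsto_nhds_unique (h.const_mul Q) (by simp only [hQP, tendsto_const_nhds])

end PowerLimit

section Projection

variable {ι R : Type*} [Fintype ι] [CommRing R] {Q S : Matrix ι ι R}

theorem Matrix.mul_eq_self_of_mul_eq_zero (hS : S * S = S)
    (hker : LinearMap.ker Q.mulVecLin ≤ LinearMap.range S.mulVecLin) {κ : Type*} [Fintype κ]
    {X : Matrix ι κ R} (hX : Q * X = 0) : S * X = X := by
  have hSidem : IsIdempotentElem S.mulVecLin := by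
    rw [IsIdempotentElem, Module.End.mul_eq_comp, ← mulVecLin_mul, hS]
  refine ext_iff_mulVec.mpr fun v => ?_
  have hXv : X *ᵥ v ∈ LinearMap.ker Q.mulVecLin := by
    rw [LinearMap.mem_ker, mulVecLin_apply, mulVec_mulVec, hX, zero_mulVec]
  rw [← mulVec_mulVec]
  exact (LinearMap.IsIdempotentElem.mem_range_iff hSidem).mp (hker hXv)

theorem Matrix.mul_mul_eq_of_mul_eq [DecidableEq ι] (hS : S * S = S)
    (hker : LinearMap.ker Q.mulVecLin ≤ LinearMap.range S.mulVecLin) {X : Matrix ι ι R}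
    (hX : Q * X = Q) : Q * S * X = Q * S := by
  have hfix : S * (X - 1) = X - 1 :=
    mul_eq_self_of_mul_eq_zero hS hker (by rw [mul_sub, hX, mul_one, sub_self])
  calc Q * S * X = Q * S + Q * (S * (X - 1)) := by noncomm_ring
    _ = Q * S := by rw [hfix, mul_sub, hX, mul_one, sub_self, add_zero]

end Projection

theorem regularized_power_limit_absorbing_general
    (n : ℕ) (P Q : Matrix (Fin n) (Fin n) ℝ)
    (hconv : Tendsto (fun k => P ^ k) atTop (nhds Q))
    (S : Matrix (Fin n) (Fin n) ℝ)
    (hSidem : S * S = S)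
    (hScol : {v | ∃ x : Fin n → ℝ, S.mulVec x = v} =
      {x | ∃ a : ℝ, ∀ i, Q.mulVec x i = a}) :
    (Q * S) * P = Q * S ∧ P * (Q * S) = Q * S ∧
      Q * (Q * S) = Q * S ∧ (Q * S) * Q = Q * S := by
  have hQQ : Q * Q = Q := (isIdempotentElem_of_tendsto_pow hconv).eq
  have hker : LinearMap.ker Q.mulVecLin ≤ LinearMap.range S.mulVecLin := by
    intro v hv
    have hcons : v ∈ {x | ∃ a : ℝ, ∀ i, Q.mulVec x i = a} := ⟨0, fun i => congrFun hv i⟩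
    rw [← hScol] at hcons
    exact hcons
  refine ⟨mul_mul_eq_of_mul_eq hSidem hker (limit_mul_eq_of_tendsto_pow hconv), ?_, ?_,
    mul_mul_eq_of_mul_eq hSidem hker hQQ⟩
  · rw [← mul_assoc, mul_limit_eq_of_tendsto_pow hconv]
  · rw [← mul_assoc, hQQ]

/-- Proposition 7, item 2: the regularized power limit `Π = Q * S` satisfies
`Π P = P Π = Q Π = Π Q = Π`. -/
theorem regularized_power_limit_absorbing
    (n : ℕ) (hn : 0 < n) (P Q : Matrix (Fin n) (Fin n) ℝ)
    (hPnonneg : ∀ i j, 0 ≤ P i j) (hProw : ∀ i, ∑ j, P i j = 1)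
    (hconv : Tendsto (fun k => P ^ k) atTop (nhds Q))
    (S : Matrix (Fin n) (Fin n) ℝ)
    (hSsym : Sᵀ = S) (hSidem : S * S = S)
    (hScol : {v | ∃ x : Fin n → ℝ, S.mulVec x = v} =
      {x | ∃ a : ℝ, ∀ i, Q.mulVec x i = a})
    (α : Fin n → ℝ) (hα : ∀ i j, (Q * S) i j = α j) :
    (Q * S) * P = Q * S ∧ P * (Q * S) = Q * S ∧
      Q * (Q * S) = Q * S ∧ (Q * S) * Q = Q * S :=
  regularized_power_limit_absorbing_general n P Q hconv S hSidem hScol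
end

section
/- Lemma (independence of the vectors q¹, …, q^ν from the proof of Lemma 1): The family of ν vectors in ℝ^N consisting of the all-ones vector 𝟙 together with the consecutive differences π̃ (k−1) − π̃ k, for k = 1, …, ν−1, is linearly independent over ℝ; that is, the family v : Fin ν → (N → ℝ) defined by v 0 = 𝟙 and v k = π̃ (k−1) − π̃ k for k ≠ 0 is linearly independent. -/
/-!
Reading off the first coordinate of every block and dividing by `π i 0` is a linear map
`ℝ^N → ℝ^ν` sending `π̃ i` to the unit vector `eᵢ`, so it suffices to show that
`e_{k-1} - e_k` (for `0 < k < ν`) together with a vector `q` whose coordinate sum is nonzero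
(here `qᵢ = (π i 0)⁻¹ > 0`, the image of `𝟙`) are independent. Partial sums send the differences
to the standard basis of `ℝ^(ν-1)`, and the coordinate sum vanishes on their span but not on `q`.
-/

section ConsecutiveDifferences

variable {n : ℕ}

theorem linearIndependent_single_castSucc_sub_single_succ {R : Type*} [Ring R] :
    LinearIndependent R fun j : Fin n =>
      (Pi.single j.castSucc 1 - Pi.single j.succ 1 : Fin (n + 1) → R) := by
  classical
  let partialSums : (Fin (n + 1) → R) →ₗ[R] Fin n → R :=
    LinearMap.pi fun k => ∑ i ∈ Finset.Iic k.castSucc, LinearMap.proj i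
  refine .of_comp partialSums ?_
  convert Pi.linearIndependent_single_one (Fin n) R with j
  ext k
  simp only [Function.comp_apply, LinearMap.pi_apply, LinearMap.coe_sum, LinearMap.coe_proj,
    Finset.sum_apply, Function.eval, Pi.sub_apply, Pi.single_apply, Finset.sum_sub_distrib,
    Finset.sum_ite_eq', Finset.mem_Iic, Fin.castSucc_le_castSucc_iff, Fin.succ_le_castSucc_iff,
    partialSums]
  rcases lt_trichotomy j k with h | rfl | h
  · simp [h, h.le, h.ne']
  · simp
  · simp [h.ne, not_le_of_gt h, h.not_gt]

variable {K : Type*} [Field K]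

theorem linearIndependent_finCons_single_castSucc_sub_single_succ
    (q : Fin (n + 1) → K) (hq : ∑ i, q i ≠ 0) :
    LinearIndependent K (Fin.cons q fun j : Fin n =>
      (Pi.single j.castSucc 1 - Pi.single j.succ 1 : Fin (n + 1) → K)) := by
  refine LinearIndependent.finCons (V := Fin (n + 1) → K)
    linearIndependent_single_castSucc_sub_single_succ fun hspan => hq ?_
  let total : (Fin (n + 1) → K) →ₗ[K] K := ∑ i, LinearMap.proj i
  have hspan_le_ker : Submodule.span K (Set.range fun j : Fin n =>
      (Pi.single j.castSucc 1 - Pi.single j.succ 1 : Fin (n + 1) → K)) ≤ LinearMap.ker total := by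
    rw [Submodule.span_le]
    rintro _ ⟨j, rfl⟩
    simp [total, Finset.sum_sub_distrib]
  simpa [total] using hspan_le_ker hspan

theorem linearIndependent_finCons_castSucc_sub_succ_of_map {M : Type*} [AddCommGroup M]
    [Module K M] (F : M →ₗ[K] Fin (n + 1) → K) (u : M) (b : Fin (n + 1) → M)
    (hb : ∀ j, F (b j) = Pi.single j 1) (hu : ∑ i, F u i ≠ 0) :
    LinearIndependent K (Fin.cons u fun j : Fin n => b j.castSucc - b j.succ) := by
  refine .of_comp F ?_
  rw [Fin.comp_cons]
  convert linearIndependent_finCons_single_castSucc_sub_single_succ (F u) hu with j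
  simp [hb]

end ConsecutiveDifferences

/-- Lemma (from the proof of Lemma 1): the all-ones vector together with the
consecutive differences `π̃ (k-1) - π̃ k` of the embedded stationary vectors
form a linearly independent family in `ℝ^N`, `N = Σ j, Fin (m j)`. -/
theorem ones_and_consecutive_differences_linearIndependent
    (ν : ℕ) (hν : 0 < ν) (m : Fin ν → ℕ) (hm : ∀ i, 1 ≤ m i)
    (π : ∀ i : Fin ν, Fin (m i) → ℝ) (hπpos : ∀ i l, 0 < π i l)
    (πt : Fin ν → ((j : Fin ν) × Fin (m j)) → ℝ)
    (hπt_diag : ∀ (i : Fin ν) (l : Fin (m i)), πt i ⟨i, l⟩ = π i l)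
    (hπt_off : ∀ (i j : Fin ν) (l : Fin (m j)), j ≠ i → πt i ⟨j, l⟩ = 0)
    (v : Fin ν → ((j : Fin ν) × Fin (m j)) → ℝ)
    (hv0 : v ⟨0, hν⟩ = fun _ => (1 : ℝ))
    (hvk : ∀ k : Fin ν, k ≠ ⟨0, hν⟩ → v k = πt ⟨k.1 - 1, Nat.lt_of_le_of_lt (Nat.sub_le _ _) k.isLt⟩ - πt k) :
    LinearIndependent ℝ v := by
  obtain ⟨n, rfl⟩ := Nat.exists_eq_add_one_of_ne_zero hν.ne'
  have hv : v = Fin.cons (fun _ => 1) fun j => πt j.castSucc - πt j.succ := by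
    ext k : 1
    refine Fin.cases hv0 (fun j => ?_) k
    rw [hvk j.succ (Fin.succ_ne_zero j), Fin.cons_succ]
    rfl
  let l₀ (i : Fin (n + 1)) : Fin (m i) := ⟨0, hm i⟩
  let F : (((j : Fin (n + 1)) × Fin (m j)) → ℝ) →ₗ[ℝ] Fin (n + 1) → ℝ :=
    LinearMap.pi fun i => (π i (l₀ i))⁻¹ • LinearMap.proj ⟨i, l₀ i⟩
  have hFπt (j : Fin (n + 1)) : F (πt j) = Pi.single j 1 := by
    ext i
    obtain rfl | hij := eq_or_ne i j
    · simp [F, hπt_diag, (hπpos _ _).ne']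
    · simp [F, hπt_off j i _ hij, hij]
  have hF_one : ∑ i, F (fun _ => 1) i ≠ 0 := by
    simpa [F] using (Finset.sum_pos (fun i _ => inv_pos.2 (hπpos i (l₀ i)))
      Finset.univ_nonempty).ne'
  rw [hv]
  exact linearIndependent_finCons_castSucc_sub_succ_of_map F _ πt hFπt hF_one
end
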